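/- arXiv:2005.01088 — 8 statements merged into one kernel-verified Lean document; each statement's English description precedes it below -/
import Mathlib

section
/- Let C be a convex subset of a real Banach space E, let F be an order complete Banach space, and let Φ : C → F be a continuous convex function. Then at every interior point x₀ of C the subdifferential ∂_{x₀}Φ is nonempty: there exists a continuous linear operator T : E → F such that Φ(x) ≥ Φ(x₀) + T(x - x₀) for all x ∈ C. Moreover, ∂_{x₀}Φ is a convex set. -/
/-!
At an interior point `x₀` the difference quotients `t⁻¹ • (Φ (x₀ + t • v) - Φ x₀)` are bounded
below (by convexity along the line through `x₀` in direction `v`), so order completeness of `F`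
provides their infimum, the directional derivative `Φ'(x₀; v)`; convexity makes it sublinear in
`v`. Kantorovich's Hahn–Banach theorem for order complete codomains (Zorn's lemma, with each
one-dimensional extension valued between a supremum and an infimum in `F`) yields a linear
`T ≤ Φ'(x₀; ·)`, hence `T (x - x₀) ≤ Φ x - Φ x₀`. At `x₀ ± w` this squeezes `T w` between two
quantities that are small for small `w` by continuity of `Φ`; as the norm of `F` is monotone on
the positive cone, `T` is bounded near `0` and hence continuous.
-/

open Set Filter Topology Pointwise

def OrderComplete (F : Type*) [Preorder F] : Prop :=
  ∀ S : Set F, S.Nonempty → BddAbove S → ∃ b, IsLUB S b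

theorem OrderComplete.nonempty_upperBounds_inter_lowerBounds {F : Type*} [Preorder F]
    (hF : OrderComplete F) {A B : Set F} (hA : A.Nonempty) (hB : B.Nonempty)
    (hAB : ∀ a ∈ A, ∀ b ∈ B, a ≤ b) : (upperBounds A ∩ lowerBounds B).Nonempty := by
  obtain ⟨b, hb⟩ := hB
  obtain ⟨c, hc⟩ := hF A hA ⟨b, fun a ha => hAB a ha b hb⟩
  exact ⟨c, hc.1, fun b hb => hc.2 fun a ha => hAB a ha b hb⟩

theorem OrderComplete.exists_isGLB {F : Type*} [AddCommGroup F] [PartialOrder F]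
    [IsOrderedAddMonoid F] (hF : OrderComplete F) {S : Set F} (hne : S.Nonempty)
    (hbdd : BddBelow S) : ∃ b, IsGLB S b := by
  obtain ⟨b, hb⟩ := hF (-S) hne.neg hbdd.neg
  exact ⟨-b, isLUB_neg.1 hb⟩

theorem LinearPMap.lt_supSpanSingleton {K E F : Type*} [DivisionRing K] [AddCommGroup E]
    [Module K E] [AddCommGroup F] [Module K F] (f : E →ₗ.[K] F) {y : E} (c : F)
    (hy : y ∉ f.domain) : f < f.supSpanSingleton y c hy := by
  refine lt_iff_le_not_ge.2 ⟨f.left_le_sup _ _, fun H => hy ?_⟩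
  replace H := LinearPMap.domain_mono.monotone H
  rw [LinearPMap.domain_supSpanSingleton, sup_le_iff, Submodule.span_le,
    singleton_subset_iff] at H
  exact H.2

section Sublinear

variable {E F : Type*} [AddCommGroup E] [Module ℝ E] [AddCommGroup F] [PartialOrder F]
  [Module ℝ F]

structure IsSublinear (p : E → F) : Prop where
  map_add_le : ∀ v w, p (v + w) ≤ p v + p w
  map_smul_of_pos : ∀ c : ℝ, 0 < c → ∀ v, p (c • v) = c • p v

namespace IsSublinear

variable {p : E → F}

theorem map_zero (hp : IsSublinear p) : p 0 = 0 := by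
  have h := hp.map_smul_of_pos 2 two_pos 0
  rwa [smul_zero, two_smul, left_eq_add] at h

theorem le_of_inv_smul_le [PosSMulMono ℝ F] (hp : IsSublinear p) {c : ℝ} (hc : 0 < c) {a : F}
    {v : E} (h : c⁻¹ • a ≤ p (c⁻¹ • v)) : a ≤ p v := by
  have h' := smul_le_smul_of_nonneg_left h hc.le
  rwa [smul_inv_smul₀ hc.ne', ← hp.map_smul_of_pos c hc, smul_inv_smul₀ hc.ne'] at h'

variable [IsOrderedAddMonoid F] [PosSMulMono ℝ F]

theorem supSpanSingleton_le (hp : IsSublinear p) {f : E →ₗ.[ℝ] F}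
    (hf : ∀ x : f.domain, f x ≤ p x) {y : E} (hy : y ∉ f.domain) {c : F}
    (hlow : ∀ x : f.domain, f x - p (x - y) ≤ c) (hup : ∀ x : f.domain, c ≤ p (x + y) - f x)
    (z : (f.supSpanSingleton y c hy).domain) : f.supSpanSingleton y c hy z ≤ p z := by
  obtain ⟨z, hz⟩ := z
  obtain ⟨x, hx, _, hry, rfl⟩ := Submodule.mem_sup.1 hz
  obtain ⟨r, rfl⟩ := Submodule.mem_span_singleton.1 hry
  rw [LinearPMap.supSpanSingleton_apply_mk _ _ _ _ _ hx, RingHom.id_apply]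
  rcases lt_trichotomy r 0 with hr | rfl | hr
  · have hs : 0 < -r := neg_pos.2 hr
    refine hp.le_of_inv_smul_le hs ?_
    have h := hlow ((-r)⁻¹ • ⟨x, hx⟩)
    rw [LinearPMap.map_smul, sub_le_iff_le_add, ← sub_le_iff_le_add'] at h
    have hm : (-r)⁻¹ * r = -1 := by rw [inv_neg, neg_mul, inv_mul_cancel₀ hr.ne]
    convert h using 2
    · rw [smul_add, smul_smul, hm, neg_one_smul, ← sub_eq_add_neg]
    · rw [smul_add, smul_smul, hm, neg_one_smul, ← sub_eq_add_neg]; rfl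
  · simpa using hf ⟨x, hx⟩
  · refine hp.le_of_inv_smul_le hr ?_
    have h := hup (r⁻¹ • ⟨x, hx⟩)
    rw [LinearPMap.map_smul, le_sub_iff_add_le'] at h
    convert h using 2
    · rw [smul_add, smul_smul, inv_mul_cancel₀ hr.ne', one_smul]
    · rw [smul_add, smul_smul, inv_mul_cancel₀ hr.ne', one_smul]; rfl

theorem exists_lt_of_domain_ne_top (hF : OrderComplete F) (hp : IsSublinear p)
    {f : E →ₗ.[ℝ] F} (hf : ∀ x : f.domain, f x ≤ p x) (hdom : f.domain ≠ ⊤) :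
    ∃ g, f < g ∧ ∀ x : g.domain, g x ≤ p x := by
  obtain ⟨y, -, hy⟩ : ∃ y ∈ ⊤, y ∉ f.domain := SetLike.exists_of_lt (lt_top_iff_ne_top.2 hdom)
  obtain ⟨c, hlow, hup⟩ := hF.nonempty_upperBounds_inter_lowerBounds
    (range_nonempty fun x : f.domain => f x - p (x - y))
    (range_nonempty fun x : f.domain => p (x + y) - f x) <| by
      rintro _ ⟨x, rfl⟩ _ ⟨x', rfl⟩
      rw [sub_le_sub_iff, ← LinearPMap.map_add]
      calc f (x + x') ≤ p (x + x') := hf _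
        _ = p ((x' + y) + (x - y)) := by congr 1; abel
        _ ≤ p (x' + y) + p (x - y) := hp.map_add_le _ _
  exact ⟨_, f.lt_supSpanSingleton c hy, hp.supSpanSingleton_le hf hy
    (forall_mem_range.1 hlow) (forall_mem_range.1 hup)⟩

/-- The Hahn–Banach–Kantorovich theorem. -/
theorem exists_linearMap_le (hF : OrderComplete F) (hp : IsSublinear p) :
    ∃ T : E →ₗ[ℝ] F, ∀ v, T v ≤ p v := by
  let S := {f : E →ₗ.[ℝ] F | ∀ x : f.domain, f x ≤ p x}
  have hchain : ∀ c ⊆ S, IsChain (· ≤ ·) c → ∀ f ∈ c, ∃ ub ∈ S, ∀ g ∈ c, g ≤ ub := by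
    intro c hcS hc f hf
    have hcd : DirectedOn (· ≤ ·) c := hc.directedOn
    refine ⟨LinearPMap.sSup c hcd, ?_, fun _ ↦ LinearPMap.le_sSup hcd⟩
    rintro ⟨x, hx⟩
    have hdir : DirectedOn (· ≤ ·) (LinearPMap.domain '' c) :=
      directedOn_image.2 (hcd.mono LinearPMap.domain_mono.monotone)
    obtain ⟨_, ⟨g, hgc, rfl⟩, hxg⟩ :=
      (Submodule.mem_sSup_of_directed (Set.Nonempty.image _ ⟨f, hf⟩) hdir).1 hx
    rw [← (LinearPMap.le_sSup hcd hgc).2 (x := ⟨x, hxg⟩) rfl]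
    exact hcS hgc ⟨x, hxg⟩
  have hbot : (0 : E →ₗ[ℝ] F).toPMap ⊥ ∈ S := by
    rintro ⟨x, hx⟩
    obtain rfl : x = 0 := (Submodule.mem_bot ℝ).1 hx
    simp [hp.map_zero]
  obtain ⟨q, -, hqS, hq⟩ := zorn_le_nonempty₀ S hchain _ hbot
  have hqtop : q.domain = ⊤ := by
    by_contra hne
    obtain ⟨g, hqg, hg⟩ := hp.exists_lt_of_domain_ne_top hF hqS hne
    exact hqg.ne' (hq hg hqg.le |>.antisymm hqg.le)
  exact ⟨q.toFun.comp (LinearMap.id.codRestrict q.domain fun x => hqtop ▸ trivial),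
    fun v => hqS ⟨v, _⟩⟩

end IsSublinear

end Sublinear

section DiffQuot

variable {E F : Type*} [AddCommGroup E] [Module ℝ E] [AddCommGroup F] [Module ℝ F]

noncomputable def diffQuot (Φ : E → F) (x₀ v : E) (t : ℝ) : F := t⁻¹ • (Φ (x₀ + t • v) - Φ x₀)

/-- The infimum of this set is the directional derivative `Φ'(x₀; v)`. -/
noncomputable def diffQuotSet (Φ : E → F) (C : Set E) (x₀ v : E) : Set F :=
  diffQuot Φ x₀ v '' {t | 0 < t ∧ x₀ + t • v ∈ C}

variable {Φ : E → F} {C : Set E} {x₀ : E}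

@[simp]
theorem diffQuot_zero (t : ℝ) : diffQuot Φ x₀ 0 t = 0 := by
  simp [diffQuot]

theorem diffQuot_smul {c : ℝ} (hc : c ≠ 0) (v : E) (t : ℝ) :
    diffQuot Φ x₀ (c • v) t = c • diffQuot Φ x₀ v (t * c) := by
  simp only [diffQuot, mul_smul, mul_inv]
  rw [smul_comm t⁻¹, smul_inv_smul₀ hc]

theorem diffQuotSet_smul {c : ℝ} (hc : 0 < c) (v : E) :
    diffQuotSet Φ C x₀ (c • v) = c • diffQuotSet Φ C x₀ v := by
  ext y
  simp only [diffQuotSet, Set.mem_smul_set, mem_image, mem_ofPred_eq]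
  constructor
  · rintro ⟨t, ⟨ht, hmem⟩, rfl⟩
    exact ⟨_, ⟨t * c, ⟨mul_pos ht hc, by rwa [mul_smul]⟩, rfl⟩, (diffQuot_smul hc.ne' v t).symm⟩
  · rintro ⟨_, ⟨t, ⟨ht, hmem⟩, rfl⟩, rfl⟩
    refine ⟨t / c, ⟨div_pos ht hc, ?_⟩, ?_⟩
    · rwa [smul_smul, div_mul_cancel₀ t hc.ne']
    · rw [diffQuot_smul hc.ne', div_mul_cancel₀ t hc.ne']

variable [PartialOrder F] [IsOrderedAddMonoid F] [PosSMulMono ℝ F]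

/-- Convexity along the segment from `x₀ + t • v` to `x₀ + t' • w`, which passes through
`x₀ + s • (v + w)` with `s = t t' / (t + t')`. -/
theorem ConvexOn.diffQuot_add_le (hΦ : ConvexOn ℝ C Φ) {v w : E} {t t' : ℝ} (ht : 0 < t)
    (ht' : 0 < t') (hv : x₀ + t • v ∈ C) (hw : x₀ + t' • w ∈ C) :
    ∃ s > 0, x₀ + s • (v + w) ∈ C ∧
      diffQuot Φ x₀ (v + w) s ≤ diffQuot Φ x₀ v t + diffQuot Φ x₀ w t' := by
  have htt : 0 < t + t' := add_pos ht ht'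
  have hab : t' / (t + t') + t / (t + t') = 1 := by
    rw [← add_div, add_comm, div_self htt.ne']
  have hpt : (t' / (t + t')) • (x₀ + t • v) + (t / (t + t')) • (x₀ + t' • w) =
      x₀ + (t * t' / (t + t')) • (v + w) := by
    match_scalars <;> field_simp
    ring
  have hconv := hΦ.2 hv hw (by positivity) (by positivity) hab
  rw [hpt] at hconv
  refine ⟨t * t' / (t + t'), by positivity,
    hpt ▸ hΦ.1 hv hw (by positivity) (by positivity) hab, ?_⟩
  calc diffQuot Φ x₀ (v + w) (t * t' / (t + t'))
      ≤ (t * t' / (t + t'))⁻¹ • ((t' / (t + t')) • Φ (x₀ + t • v) +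
          (t / (t + t')) • Φ (x₀ + t' • w) - Φ x₀) :=
        smul_le_smul_of_nonneg_left (sub_le_sub_right hconv _) (by positivity)
    _ = diffQuot Φ x₀ v t + diffQuot Φ x₀ w t' := by
        simp only [diffQuot]
        match_scalars <;> field_simp
        ring

theorem ConvexOn.exists_isSublinear_le_diffQuot (hF : OrderComplete F) (hΦ : ConvexOn ℝ C Φ)
    (habs : ∀ v, ∃ t : ℝ, 0 < t ∧ x₀ + t • v ∈ C) :
    ∃ p : E → F, IsSublinear p ∧
      ∀ v, ∀ t : ℝ, 0 < t → x₀ + t • v ∈ C → p v ≤ diffQuot Φ x₀ v t := by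
  have hne : ∀ v, (diffQuotSet Φ C x₀ v).Nonempty := fun v =>
    let ⟨t, ht, hmem⟩ := habs v
    ⟨_, t, ⟨ht, hmem⟩, rfl⟩
  have hbdd : ∀ v, BddBelow (diffQuotSet Φ C x₀ v) := by
    intro v
    obtain ⟨s, hs, hms⟩ := habs (-v)
    refine ⟨-diffQuot Φ x₀ (-v) s, ?_⟩
    rintro _ ⟨t, ⟨ht, hmt⟩, rfl⟩
    obtain ⟨_, -, -, hle⟩ := hΦ.diffQuot_add_le hs ht hms hmt
    rw [neg_add_cancel, diffQuot_zero] at hle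
    exact neg_le_iff_add_nonneg'.2 hle
  choose p hp using fun v => hF.exists_isGLB (hne v) (hbdd v)
  refine ⟨p, ⟨fun v w => ?_, fun c hc v => ?_⟩, fun v t ht hmem => (hp v).1 ⟨t, ⟨ht, hmem⟩, rfl⟩⟩
  · refine ((hp v).add (hp w)).2 ?_
    rintro _ ⟨_, ⟨t, ⟨ht, hv⟩, rfl⟩, _, ⟨t', ⟨ht', hw⟩, rfl⟩, rfl⟩
    obtain ⟨s, hs, hmem, hle⟩ := hΦ.diffQuot_add_le ht ht' hv hw
    exact ((hp (v + w)).1 ⟨s, ⟨hs, hmem⟩, rfl⟩).trans hle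
  · refine (hp (c • v)).unique ?_
    rw [diffQuotSet_smul hc, ← Set.image_smul]
    exact (OrderIso.smulRight hc).isGLB_image'.2 (hp v)

theorem ConvexOn.exists_linearMap_subgradient (hF : OrderComplete F) (hΦ : ConvexOn ℝ C Φ)
    (habs : ∀ v, ∃ t : ℝ, 0 < t ∧ x₀ + t • v ∈ C) :
    ∃ T : E →ₗ[ℝ] F, ∀ x ∈ C, Φ x₀ + T (x - x₀) ≤ Φ x := by
  obtain ⟨p, hp, hpdq⟩ := hΦ.exists_isSublinear_le_diffQuot hF habs
  obtain ⟨T, hT⟩ := hp.exists_linearMap_le hF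
  refine ⟨T, fun x hx => le_sub_iff_add_le'.1 ?_⟩
  calc T (x - x₀) ≤ p (x - x₀) := hT _
    _ ≤ diffQuot Φ x₀ (x - x₀) 1 := hpdq _ 1 one_pos (by rwa [one_smul, add_sub_cancel])
    _ = Φ x - Φ x₀ := by simp [diffQuot]

end DiffQuot

theorem exists_pos_add_smul_mem_of_mem_interior {E : Type*} [TopologicalSpace E] [AddCommGroup E]
    [Module ℝ E] [ContinuousAdd E] [ContinuousSMul ℝ E] {C : Set E} {x₀ : E}
    (hx₀ : x₀ ∈ interior C) (v : E) : ∃ t : ℝ, 0 < t ∧ x₀ + t • v ∈ C := by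
  have h : Tendsto (fun t : ℝ => x₀ + t • v) (𝓝[>] 0) (𝓝 x₀) := by
    refine Tendsto.mono_left ?_ nhdsWithin_le_nhds
    have hc : Continuous fun t : ℝ => x₀ + t • v := by fun_prop
    simpa using hc.tendsto 0
  obtain ⟨t, hmem, ht⟩ :=
    ((h.eventually (mem_interior_iff_mem_nhds.1 hx₀)).and self_mem_nhdsWithin).exists
  exact ⟨t, ht, hmem⟩

theorem norm_le_of_le_of_le {F : Type*} [NormedAddCommGroup F] [PartialOrder F]
    [IsOrderedAddMonoid F] (hmono : ∀ x y : F, 0 ≤ x → x ≤ y → ‖x‖ ≤ ‖y‖) {a x b : F}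
    (hax : a ≤ x) (hxb : x ≤ b) : ‖x‖ ≤ ‖a‖ + 2 * ‖b‖ := by
  have h : ‖b - x‖ ≤ ‖b - a‖ := hmono _ _ (sub_nonneg.2 hxb) (sub_le_sub_left hax b)
  calc ‖x‖ = ‖b - (b - x)‖ := by rw [sub_sub_cancel]
    _ ≤ ‖b‖ + ‖b - x‖ := norm_sub_le _ _
    _ ≤ ‖b‖ + (‖b‖ + ‖a‖) := by grw [h, norm_sub_le]
    _ = ‖a‖ + 2 * ‖b‖ := by ring

section Normed

variable {E F : Type*} [NormedAddCommGroup E] [NormedSpace ℝ E] [NormedAddCommGroup F]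
  [NormedSpace ℝ F] [PartialOrder F] [IsOrderedAddMonoid F]

theorem LinearMap.continuous_of_eventually_le (hmono : ∀ x y : F, 0 ≤ x → x ≤ y → ‖x‖ ≤ ‖y‖)
    {T : E →ₗ[ℝ] F} {Φ : E → F} {x₀ : E} (hT : ∀ᶠ x in 𝓝 x₀, Φ x₀ + T (x - x₀) ≤ Φ x)
    (hΦ : ContinuousAt Φ x₀) : Continuous T := by
  let P : E → Prop := fun x => Φ x₀ + T (x - x₀) ≤ Φ x ∧ ‖Φ x - Φ x₀‖ < 1
  have hP : ∀ᶠ x in 𝓝 x₀, P x :=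
    hT.and (hΦ.eventually (Metric.ball_mem_nhds _ one_pos) |>.mono fun x hx => by
      rwa [dist_eq_norm] at hx)
  have hs : {w | P (x₀ + w) ∧ P (x₀ - w)} ∈ 𝓝 (0 : E) := by
    refine Filter.inter_mem ?_ ?_
    · exact (continuous_const.add continuous_id).tendsto' 0 x₀ (add_zero x₀) hP
    · exact (continuous_const.sub continuous_id).tendsto' 0 x₀ (sub_zero x₀) hP
  refine T.toAddMonoidHom.continuous_of_isBounded_nhds_zero hs ?_
  refine isBounded_iff_forall_norm_le.2 ⟨3, ?_⟩
  rintro _ ⟨w, ⟨⟨hTw, hΦw⟩, ⟨hTw', hΦw'⟩⟩, rfl⟩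
  rw [add_sub_cancel_left, ← le_sub_iff_add_le'] at hTw
  rw [sub_sub_cancel_left, map_neg, ← sub_eq_add_neg, sub_le_comm] at hTw'
  calc ‖T w‖ ≤ ‖Φ x₀ - Φ (x₀ - w)‖ + 2 * ‖Φ (x₀ + w) - Φ x₀‖ :=
        norm_le_of_le_of_le hmono hTw' hTw
    _ ≤ 1 + 2 * 1 := by
      rw [norm_sub_rev] at hΦw'
      gcongr
    _ = 3 := by norm_num

end Normed

theorem convex_setOf_subgradient {E F : Type*} [NormedAddCommGroup E] [NormedSpace ℝ E]
    [NormedAddCommGroup F] [NormedSpace ℝ F] [PartialOrder F] [IsOrderedAddMonoid F]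
    [PosSMulMono ℝ F] (Φ : E → F) (C : Set E) (x₀ : E) :
    Convex ℝ {T : E →L[ℝ] F | ∀ x ∈ C, Φ x₀ + T (x - x₀) ≤ Φ x} := by
  simp_rw [← le_sub_iff_add_le', ofPred_forall]
  exact convex_iInter₂ fun x _ =>
    convex_halfSpace_le (ContinuousLinearMap.apply ℝ F (x - x₀)).isLinear _

theorem subdifferential_nonempty_convex_at_interior_point_general
    {E F : Type*}
    [NormedAddCommGroup E] [NormedSpace ℝ E]
    [NormedAddCommGroup F] [NormedSpace ℝ F]
    [PartialOrder F] [CovariantClass F F (· + ·) (· ≤ ·)]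
    (hsmulF : ∀ (c : ℝ) (x : F), 0 ≤ c → 0 ≤ x → 0 ≤ c • x)
    (hmonoF : ∀ x y : F, 0 ≤ x → x ≤ y → ‖x‖ ≤ ‖y‖)
    (hcompF : ∀ S : Set F, S.Nonempty → BddAbove S → ∃ b, IsLUB S b)
    {C : Set E} (hC : Convex ℝ C) (Φ : E → F)
    (hconv : ∀ x ∈ C, ∀ y ∈ C, ∀ t : ℝ, 0 ≤ t → t ≤ 1 →
      Φ ((1 - t) • x + t • y) ≤ (1 - t) • Φ x + t • Φ y)
    (hcont : ContinuousOn Φ C)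
    {x₀ : E} (hx₀ : x₀ ∈ interior C) :
    ({T : E →L[ℝ] F | ∀ x ∈ C, Φ x₀ + T (x - x₀) ≤ Φ x}).Nonempty ∧
      Convex ℝ {T : E →L[ℝ] F | ∀ x ∈ C, Φ x₀ + T (x - x₀) ≤ Φ x} := by
  have : IsOrderedAddMonoid F := { add_le_add_left := fun _ _ h c => add_le_add_left h c }
  have : PosSMulMono ℝ F := .of_smul_nonneg fun c hc x hx => hsmulF c x hc hx
  have hΦ : ConvexOn ℝ C Φ := ⟨hC, fun x hx y hy a b ha hb hab => by
    obtain rfl : a = 1 - b := eq_sub_of_add_eq hab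
    exact hconv x hx y hy b hb (by linarith)⟩
  obtain ⟨T, hT⟩ := hΦ.exists_linearMap_subgradient hcompF
    (exists_pos_add_smul_mem_of_mem_interior hx₀)
  have hC₀ : C ∈ 𝓝 x₀ := mem_interior_iff_mem_nhds.1 hx₀
  have hTcont : Continuous T :=
    T.continuous_of_eventually_le hmonoF (eventually_of_mem hC₀ hT) (hcont.continuousAt hC₀)
  exact ⟨⟨⟨T, hTcont⟩, hT⟩, convex_setOf_subgradient Φ C x₀⟩

/-- (Valadier–Zowe) Let `C` be a convex subset of a real Banach space `E`,
`F` an order complete Banach space and `Φ : C → F` a continuous convex function. Then at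
every interior point `x₀` of `C` the subdifferential `∂_{x₀}Φ` is a nonempty convex set. -/
theorem subdifferential_nonempty_convex_at_interior_point
    {E F : Type*}
    [NormedAddCommGroup E] [NormedSpace ℝ E] [CompleteSpace E]
    [NormedAddCommGroup F] [NormedSpace ℝ F] [CompleteSpace F]
    [PartialOrder F] [CovariantClass F F (· + ·) (· ≤ ·)]
    (hsmulF : ∀ (c : ℝ) (x : F), 0 ≤ c → 0 ≤ x → 0 ≤ c • x)
    (hclosedF : IsClosed {x : F | 0 ≤ x})
    (hgenF : ∀ x : F, ∃ u v : F, 0 ≤ u ∧ 0 ≤ v ∧ x = u - v)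
    (hmonoF : ∀ x y : F, 0 ≤ x → x ≤ y → ‖x‖ ≤ ‖y‖)
    (hcompF : ∀ S : Set F, S.Nonempty → BddAbove S → ∃ b, IsLUB S b)
    {C : Set E} (hC : Convex ℝ C) (Φ : E → F)
    (hconv : ∀ x ∈ C, ∀ y ∈ C, ∀ t : ℝ, 0 ≤ t → t ≤ 1 →
      Φ ((1 - t) • x + t • y) ≤ (1 - t) • Φ x + t • Φ y)
    (hcont : ContinuousOn Φ C)
    {x₀ : E} (hx₀ : x₀ ∈ interior C) :
    ({T : E →L[ℝ] F | ∀ x ∈ C, Φ x₀ + T (x - x₀) ≤ Φ x}).Nonempty ∧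
      Convex ℝ {T : E →L[ℝ] F | ∀ x ∈ C, Φ x₀ + T (x - x₀) ≤ Φ x} :=
  subdifferential_nonempty_convex_at_interior_point_general hsmulF hmonoF hcompF hC Φ hconv hcont
    hx₀
end

section
/- (Generalized Hahn–Banach extension theorem) Let Φ be a convex function defined on a real vector space E taking values in an order complete vector space F. If H is a linear subspace of E and T_H : H → F is a linear operator satisfying T_H(x) ≤ Φ(x) for all x ∈ H, then there exists a linear operator T : E → F which extends T_H and satisfies T(x) ≤ Φ(x) for all x ∈ E. -/
/-!
By Zorn's lemma it suffices to extend a dominated partial map `f` by one direction `v`, i.e. to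
find `b` with `f x + r • b ≤ Φ (x + r • v)` for all `x` in the domain and all scalars `r`.
For `r < 0` and `r > 0` this says that `b` lies above every `s⁻¹ • (f y - Φ (y - s • v))` and
below every `t⁻¹ • (Φ (x + t • v) - f x)` (`s, t > 0`). Convexity of `Φ` at the points
`x + t • v` and `y - s • v`, whose suitable convex combination lies in the domain, shows that
every lower quantity is below every upper one, so order completeness provides `b` as a least
upper bound of the lower ones.
-/

open Set

namespace LinearPMap

variable {E F : Type*} [AddCommGroup E] [AddCommGroup F]

theorem sSup_apply_le {R : Type*} [Ring R] [Module R E] [Module R F] [LE F] {Φ : E → F}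
    {c : Set (E →ₗ.[R] F)} (hne : c.Nonempty) (hc : DirectedOn (· ≤ ·) c)
    (hcΦ : ∀ g ∈ c, ∀ x, g x ≤ Φ x) (x : (LinearPMap.sSup c hc).domain) :
    LinearPMap.sSup c hc x ≤ Φ x := by
  obtain ⟨g, hg, hx⟩ := (mem_domain_sSup_iff hne hc).1 x.2
  have := hcΦ g hg ⟨x, hx⟩
  rwa [← LinearPMap.sSup_apply hc hg] at this

variable {𝕜 : Type*} [Field 𝕜] [LinearOrder 𝕜] [IsStrictOrderedRing 𝕜] [Module 𝕜 E]
  [PartialOrder F] [IsOrderedAddMonoid F] [Module 𝕜 F] [PosSMulMono 𝕜 F]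
  {Φ : E → F} {f : E →ₗ.[𝕜] F}

theorem smul_sub_le_smul_sub_of_convexOn (hΦ : ConvexOn 𝕜 univ Φ) (hf : ∀ x, f x ≤ Φ x)
    (v : E) (x y : f.domain) {s t : 𝕜} (hs : 0 < s) (ht : 0 < t) :
    t • (f y - Φ (y - s • v)) ≤ s • (Φ (x + t • v) - f x) := by
  have hst : 0 < s + t := add_pos hs ht
  set w : f.domain := (s + t)⁻¹ • (s • x + t • y)
  -- `w` is the convex combination of `x + t • v` and `y - s • v` in which `v` cancels.
  have hw : (w : E) = (s / (s + t)) • (x + t • v) + (t / (s + t)) • (y - s • v) := by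
    simp only [w, Submodule.coe_smul, Submodule.coe_add]
    match_scalars <;> field_simp; ring
  have hconv := hΦ.2 (mem_univ (x + t • v)) (mem_univ (y - s • v))
    (div_pos hs hst).le (div_pos ht hst).le (by field_simp)
  rw [← hw] at hconv
  have key : (s + t)⁻¹ • (s • f x + t • f y) ≤
      (s + t)⁻¹ • (s • Φ (x + t • v) + t • Φ (y - s • v)) := by
    calc (s + t)⁻¹ • (s • f x + t • f y) = f w := by simp only [w, map_smul, map_add]
      _ ≤ Φ w := hf w
      _ ≤ _ := hconv
      _ = _ := by simp only [smul_add, smul_smul, div_eq_inv_mul]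
  rw [smul_le_smul_iff_of_pos_left (inv_pos.2 hst)] at key
  rw [smul_sub, smul_sub, sub_le_sub_iff, add_comm]
  exact key

theorem exists_add_smul_le_of_convexOn
    (hcomp : ∀ S : Set F, S.Nonempty → BddAbove S → ∃ b, IsLUB S b)
    (hΦ : ConvexOn 𝕜 univ Φ) (hf : ∀ x, f x ≤ Φ x) (v : E) :
    ∃ b : F, ∀ (x : f.domain) (r : 𝕜), f x + r • b ≤ Φ (x + r • v) := by
  have cross (x y : f.domain) {s t : 𝕜} (hs : 0 < s) (ht : 0 < t) :
      s⁻¹ • (f y - Φ (y - s • v)) ≤ t⁻¹ • (Φ (x + t • v) - f x) := by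
    rw [inv_smul_le_iff_of_pos hs, smul_comm, le_inv_smul_iff_of_pos ht]
    exact smul_sub_le_smul_sub_of_convexOn hΦ hf v x y hs ht
  set L : Set F := {z | ∃ (y : f.domain) (s : 𝕜), 0 < s ∧ s⁻¹ • (f y - Φ (y - s • v)) = z}
  obtain ⟨b, hb⟩ := hcomp L ⟨_, 0, 1, one_pos, rfl⟩
    ⟨_, fun _ ⟨y, s, hs, hz⟩ ↦ hz ▸ cross 0 y hs one_pos⟩
  refine ⟨b, fun x r ↦ ?_⟩
  rcases lt_trichotomy r 0 with hr | rfl | hr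
  · have hlow := hb.1 ⟨x, -r, neg_pos.2 hr, rfl⟩
    rw [inv_smul_le_iff_of_pos (neg_pos.2 hr), neg_smul, neg_smul, sub_neg_eq_add,
      sub_le_iff_le_add] at hlow
    rwa [neg_add_eq_sub, le_sub_iff_add_le] at hlow
  · simpa using hf x
  · have hup := hb.2 fun _ ⟨y, s, hs, hz⟩ ↦ hz ▸ cross x y hs hr
    rwa [le_inv_smul_iff_of_pos hr, le_sub_iff_add_le'] at hup

theorem exists_lt_forall_le_of_convexOn
    (hcomp : ∀ S : Set F, S.Nonempty → BddAbove S → ∃ b, IsLUB S b)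
    (hΦ : ConvexOn 𝕜 univ Φ) (hf : ∀ x, f x ≤ Φ x) (hdom : f.domain ≠ ⊤) :
    ∃ g : E →ₗ.[𝕜] F, f < g ∧ ∀ x, g x ≤ Φ x := by
  obtain ⟨v, -, hv⟩ := SetLike.exists_of_lt (lt_top_iff_ne_top.2 hdom)
  obtain ⟨b, hb⟩ := exists_add_smul_le_of_convexOn hcomp hΦ hf v
  refine ⟨f.supSpanSingleton v b hv, lt_iff_le_not_ge.2 ⟨f.left_le_sup _ _, fun hle ↦ ?_⟩, ?_⟩
  · have hdom_le := LinearPMap.domain_mono.monotone hle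
    rw [domain_supSpanSingleton, sup_le_iff, Submodule.span_le, singleton_subset_iff] at hdom_le
    exact hv hdom_le.2
  · rintro ⟨z, hz⟩
    obtain ⟨x, hx, _, hy, rfl⟩ := Submodule.mem_sup.1 hz
    obtain ⟨r, rfl⟩ := Submodule.mem_span_singleton.1 hy
    rw [supSpanSingleton_apply_mk _ _ _ _ _ hx]
    exact hb ⟨x, hx⟩ r

theorem exists_domain_eq_top_of_convexOn
    (hcomp : ∀ S : Set F, S.Nonempty → BddAbove S → ∃ b, IsLUB S b)
    (hΦ : ConvexOn 𝕜 univ Φ) (hf : ∀ x, f x ≤ Φ x) :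
    ∃ g : E →ₗ.[𝕜] F, f ≤ g ∧ g.domain = ⊤ ∧ ∀ x, g x ≤ Φ x := by
  obtain ⟨g, hfg, hg⟩ := zorn_le_nonempty₀ {g : E →ₗ.[𝕜] F | ∀ x, g x ≤ Φ x}
    (fun c hcΦ hchain y hy ↦ ⟨LinearPMap.sSup c hchain.directedOn,
      sSup_apply_le ⟨y, hy⟩ hchain.directedOn hcΦ, fun _ ↦ LinearPMap.le_sSup _⟩) f hf
  refine ⟨g, hfg, ?_, hg.prop⟩
  by_contra hdom
  obtain ⟨g', hgg', hg'⟩ := exists_lt_forall_le_of_convexOn hcomp hΦ hg.prop hdom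
  exact hgg'.not_ge (hg.le_of_ge hg' hgg'.le)

end LinearPMap

open LinearPMap in
/-- (Generalized Hahn–Banach extension theorem) Let `Φ` be a convex
function from a real vector space `E` into an order complete ordered vector space `F`.
Any linear operator `T_H` on a subspace `H` of `E` with `T_H ≤ Φ` on `H` extends to a
linear operator `T : E → F` with `T ≤ Φ` on `E`. -/
theorem generalized_hahn_banach_extension
    {E F : Type*} [AddCommGroup E] [Module ℝ E]
    [AddCommGroup F] [Module ℝ F] [PartialOrder F]
    [CovariantClass F F (· + ·) (· ≤ ·)]
    (hsmulF : ∀ (c : ℝ) (x : F), 0 ≤ c → 0 ≤ x → 0 ≤ c • x)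
    (hcompF : ∀ S : Set F, S.Nonempty → BddAbove S → ∃ b, IsLUB S b)
    (Φ : E → F)
    (hconv : ∀ x y : E, ∀ t : ℝ, 0 ≤ t → t ≤ 1 →
      Φ ((1 - t) • x + t • y) ≤ (1 - t) • Φ x + t • Φ y)
    (H : Submodule ℝ E) (T_H : H →ₗ[ℝ] F)
    (hTH : ∀ x : H, T_H x ≤ Φ x) :
    ∃ T : E →ₗ[ℝ] F, (∀ x : H, T x = T_H x) ∧ ∀ x : E, T x ≤ Φ x := by
  have : IsOrderedAddMonoid F :=
    { add_le_add_left a b hab c := by simpa only [add_comm _ c] using CovariantClass.elim c hab }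
  have : PosSMulMono ℝ F := .of_smul_nonneg fun c hc x hx ↦ hsmulF c x hc hx
  have hΦ : ConvexOn ℝ univ Φ := ⟨convex_univ, fun x _ y _ a b _ hb hab ↦ by
    obtain rfl : a = 1 - b := by linarith
    exact hconv x y b hb (by linarith)⟩
  obtain ⟨⟨_, T⟩, ⟨-, hT_H⟩, rfl, hTΦ⟩ :=
    exists_domain_eq_top_of_convexOn hcompF hΦ (f := ⟨H, T_H⟩) hTH
  exact ⟨T.comp (LinearMap.id.codRestrict ⊤ fun _ ↦ trivial), fun x ↦ (hT_H rfl).symm,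
    fun x ↦ hTΦ ⟨x, trivial⟩⟩
end

section
/- Let Φ be a convex function defined on a real Banach space E taking values in an order complete Banach space F, such that Φ(0) = 0 and Φ is continuous at the origin. If H is a linear subspace of E and T_H : H → F is a linear operator satisfying T_H(x) ≤ Φ(x) for all x ∈ H, then there exists a continuous linear operator T : E → F which extends T_H and satisfies T(x) ≤ Φ(x) for all x ∈ E. -/
/-!
By Zorn's lemma it suffices to extend a dominated linear map `p` by one dimension, to
`p ⊕ ℝ y`. The value `c` at `y` has to satisfy
`s⁻¹ (p v - Φ (v - s y)) ≤ c ≤ t⁻¹ (Φ (w + t y) - p w)` for all `s, t > 0` and `v, w` in the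
domain; convexity of `Φ` shows that every lower quotient lies below every upper one, so order
completeness of `F` provides `c` as a supremum. The extension `T` is continuous because
`-Φ (-x) ≤ T x ≤ Φ x` and the norm is monotone on the positive cone, so `T` is bounded on a ball
on which `Φ` is bounded.
-/

open Set

theorem LinearPMap.sSup_apply_le_s6 {R E F : Type*} [Ring R] [AddCommGroup E] [Module R E]
    [AddCommGroup F] [Module R F] [LE F] {Φ : E → F}
    {c : Set (E →ₗ.[R] F)} (hne : c.Nonempty) (hc : DirectedOn (· ≤ ·) c)
    (hle : ∀ f ∈ c, ∀ x : f.domain, f x ≤ Φ x) (x : (LinearPMap.sSup c hc).domain) :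
    LinearPMap.sSup c hc x ≤ Φ x := by
  obtain ⟨f, hf, hx⟩ := (LinearPMap.mem_domain_sSup_iff hne hc).1 x.2
  calc LinearPMap.sSup c hc x = f ⟨x, hx⟩ := ((LinearPMap.le_sSup hc hf).2 rfl).symm
    _ ≤ Φ x := hle f hf ⟨x, hx⟩

section Extension

variable {E F : Type*} [AddCommGroup E] [Module ℝ E]
  [AddCommGroup F] [PartialOrder F] [IsOrderedAddMonoid F] [Module ℝ F] [PosSMulMono ℝ F]
  {Φ : E → F}

/-- Convexity of `Φ` on the segment from `w + t • y` to `v - s • y`, which meets the domain of `p`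
at `(s • w + t • v) / (s + t)`. -/
theorem ConvexOn.inv_smul_sub_le_inv_smul_sub (hΦ : ConvexOn ℝ univ Φ) {p : E →ₗ.[ℝ] F}
    (hp : ∀ x : p.domain, p x ≤ Φ x) (y : E) {s t : ℝ} (hs : 0 < s) (ht : 0 < t)
    (v w : p.domain) :
    s⁻¹ • (p v - Φ (v - s • y)) ≤ t⁻¹ • (Φ (w + t • y) - p w) := by
  have hst : 0 < s + t := add_pos hs ht
  set a := s / (s + t)
  set b := t / (s + t)
  have hab : a + b = 1 := by rw [← add_div, div_self hst.ne']
  have hseg : a • ((w : E) + t • y) + b • ((v : E) - s • y) = ((a • w + b • v : p.domain) : E) := by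
    simp only [Submodule.coe_add, Submodule.coe_smul, a, b]
    match_scalars <;> field_simp
    ring
  have hconv : a • p w + b • p v ≤ a • Φ (w + t • y) + b • Φ (v - s • y) := by
    calc a • p w + b • p v = p (a • w + b • v) := by
          simp only [LinearPMap.map_add, LinearPMap.map_smul]
      _ ≤ Φ (a • (w + t • y) + b • (v - s • y)) := hseg ▸ hp _
      _ ≤ _ := hΦ.2 trivial trivial (by positivity) (by positivity) hab
  have hscaled := smul_le_smul_of_nonneg_left (sub_nonneg.2 hconv)
    (by positivity : (0 : ℝ) ≤ (s + t) / (s * t))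
  rw [smul_zero] at hscaled
  rw [← sub_nonneg]
  convert hscaled using 1
  simp only [a, b]
  match_scalars <;> field_simp

theorem ConvexOn.exists_add_smul_le (hcomp : ∀ S : Set F, S.Nonempty → BddAbove S → ∃ b, IsLUB S b)
    (hΦ : ConvexOn ℝ univ Φ) {p : E →ₗ.[ℝ] F} (hp : ∀ x : p.domain, p x ≤ Φ x) (y : E) :
    ∃ c : F, ∀ (x : p.domain) (r : ℝ), p x + r • c ≤ Φ (x + r • y) := by
  set S : Set F := {z | ∃ s > (0 : ℝ), ∃ v : p.domain, z = s⁻¹ • (p v - Φ (v - s • y))}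
  have hS_le : ∀ t > (0 : ℝ), ∀ w : p.domain, t⁻¹ • (Φ (w + t • y) - p w) ∈ upperBounds S := by
    rintro t ht w _ ⟨s, hs, v, rfl⟩
    exact hΦ.inv_smul_sub_le_inv_smul_sub hp y hs ht v w
  obtain ⟨c, hc⟩ := hcomp S ⟨_, 1, one_pos, 0, rfl⟩ ⟨_, hS_le 1 one_pos 0⟩
  refine ⟨c, fun x r => ?_⟩
  rcases lt_trichotomy r 0 with hr | rfl | hr
  · have hneg : 0 < -r := neg_pos.2 hr
    have := smul_le_smul_of_nonneg_left (hc.1 ⟨-r, hneg, x, rfl⟩) hneg.le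
    rw [smul_smul, mul_inv_cancel₀ hneg.ne', one_smul, neg_smul, sub_neg_eq_add, neg_smul] at this
    rwa [sub_le_iff_le_add, neg_add_eq_sub, le_sub_iff_add_le] at this
  · simpa using hp x
  · have := smul_le_smul_of_nonneg_left (hc.2 (hS_le r hr x)) hr.le
    rw [smul_smul, mul_inv_cancel₀ hr.ne', one_smul] at this
    rwa [le_sub_iff_add_le'] at this

theorem ConvexOn.exists_lt_forall_le
    (hcomp : ∀ S : Set F, S.Nonempty → BddAbove S → ∃ b, IsLUB S b)
    (hΦ : ConvexOn ℝ univ Φ) {p : E →ₗ.[ℝ] F} (hp : ∀ x : p.domain, p x ≤ Φ x)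
    (hdom : p.domain ≠ ⊤) :
    ∃ q, p < q ∧ ∀ x : q.domain, q x ≤ Φ x := by
  obtain ⟨y, -, hy⟩ : ∃ y ∈ ⊤, y ∉ p.domain := SetLike.exists_of_lt (lt_top_iff_ne_top.2 hdom)
  obtain ⟨c, hc⟩ := hΦ.exists_add_smul_le hcomp hp y
  refine ⟨p.supSpanSingleton y c hy, ?_, ?_⟩
  · refine lt_iff_le_not_ge.2 ⟨p.left_le_sup _ _, fun hle => hy ?_⟩
    have := LinearPMap.domain_mono.monotone hle
    rw [LinearPMap.domain_supSpanSingleton, sup_le_iff, Submodule.span_le,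
      singleton_subset_iff] at this
    exact this.2
  · rintro ⟨z, hz⟩
    obtain ⟨x, hx, _, hy', rfl⟩ := Submodule.mem_sup.1 hz
    obtain ⟨r, rfl⟩ := Submodule.mem_span_singleton.1 hy'
    rw [LinearPMap.supSpanSingleton_apply_mk _ _ _ _ _ hx]
    exact hc ⟨x, hx⟩ r

theorem ConvexOn.exists_top_forall_le
    (hcomp : ∀ S : Set F, S.Nonempty → BddAbove S → ∃ b, IsLUB S b)
    (hΦ : ConvexOn ℝ univ Φ) {p : E →ₗ.[ℝ] F} (hp : ∀ x : p.domain, p x ≤ Φ x) :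
    ∃ q ≥ p, q.domain = ⊤ ∧ ∀ x : q.domain, q x ≤ Φ x := by
  set S := {q : E →ₗ.[ℝ] F | ∀ x : q.domain, q x ≤ Φ x}
  have hchain : ∀ c ⊆ S, IsChain (· ≤ ·) c → ∀ f ∈ c, ∃ ub ∈ S, ∀ g ∈ c, g ≤ ub :=
    fun c hcS hc f hf => ⟨_, LinearPMap.sSup_apply_le_s6 ⟨f, hf⟩ hc.directedOn hcS,
      fun _ => LinearPMap.le_sSup hc.directedOn⟩
  obtain ⟨q, hpq, hqS, hmax⟩ := zorn_le_nonempty₀ S hchain p hp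
  refine ⟨q, hpq, by_contra fun hdom => ?_, hqS⟩
  obtain ⟨r, hqr, hrS⟩ := hΦ.exists_lt_forall_le hcomp hqS hdom
  exact hqr.not_ge (hmax hrS hqr.le)

theorem ConvexOn.exists_linearMap_extension_le
    (hcomp : ∀ S : Set F, S.Nonempty → BddAbove S → ∃ b, IsLUB S b)
    (hΦ : ConvexOn ℝ univ Φ) {H : Submodule ℝ E} (f : H →ₗ[ℝ] F) (hf : ∀ x : H, f x ≤ Φ x) :
    ∃ g : E →ₗ[ℝ] F, (∀ x : H, g x = f x) ∧ ∀ x, g x ≤ Φ x := by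
  obtain ⟨⟨_, g⟩, ⟨-, hfg⟩, rfl, hg⟩ := hΦ.exists_top_forall_le hcomp (p := ⟨H, f⟩) hf
  exact ⟨g.comp (LinearMap.id.codRestrict ⊤ fun _ => trivial), fun x => (hfg rfl).symm,
    fun x => hg ⟨x, trivial⟩⟩

end Extension

section Continuity

variable {F : Type*} [NormedAddCommGroup F] [PartialOrder F] [IsOrderedAddMonoid F]

theorem norm_le_of_mem_Icc (hmono : ∀ x y : F, 0 ≤ x → x ≤ y → ‖x‖ ≤ ‖y‖) {a l u : F}
    (ha : a ∈ Icc l u) : ‖a‖ ≤ ‖u‖ + 2 * ‖l‖ := by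
  have : ‖a - l‖ ≤ ‖u - l‖ :=
    hmono _ _ (sub_nonneg.2 ha.1) (sub_le_sub_right ha.2 l)
  calc ‖a‖ = ‖(a - l) + l‖ := by rw [sub_add_cancel]
    _ ≤ ‖a - l‖ + ‖l‖ := norm_add_le _ _
    _ ≤ ‖u - l‖ + ‖l‖ := by gcongr
    _ ≤ ‖u‖ + 2 * ‖l‖ := by linarith [norm_sub_le u l]

theorem LinearMap.continuous_of_le_of_continuousAt {E : Type*} [NormedAddCommGroup E]
    [NormedSpace ℝ E] [NormedSpace ℝ F] (hmono : ∀ x y : F, 0 ≤ x → x ≤ y → ‖x‖ ≤ ‖y‖)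
    {Φ : E → F} (hΦ : ContinuousAt Φ 0) (f : E →ₗ[ℝ] F) (hf : ∀ x, f x ≤ Φ x) :
    Continuous f := by
  obtain ⟨δ, hδ, hball⟩ := Metric.continuousAt_iff.1 hΦ 1 one_pos
  have hΦ_bdd : ∀ x ∈ Metric.ball (0 : E) δ, ‖Φ x‖ ≤ ‖Φ 0‖ + 1 := fun x hx => by
    have := hball hx
    linarith [norm_le_norm_add_norm_sub' (Φ x) (Φ 0), dist_eq_norm (Φ x) (Φ 0)]
  have hf_bdd : ∀ x ∈ Metric.ball (0 : E) δ, ‖f x‖ ≤ 3 * (‖Φ 0‖ + 1) := fun x hx => by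
    have hnx : -x ∈ Metric.ball (0 : E) δ := by simpa using hx
    have hIcc : f x ∈ Icc (-Φ (-x)) (Φ x) :=
      ⟨by simpa [neg_le] using hf (-x), hf x⟩
    linarith [norm_le_of_mem_Icc hmono hIcc, norm_neg (Φ (-x)), hΦ_bdd x hx, hΦ_bdd _ hnx]
  obtain ⟨C, hC⟩ := f.bound_of_ball_bound hδ _ hf_bdd
  exact AddMonoidHomClass.continuous_of_bound f C hC

end Continuity

theorem generalized_hahn_banach_extension_continuous_general
    {E F : Type*}
    [NormedAddCommGroup E] [NormedSpace ℝ E]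
    [NormedAddCommGroup F] [NormedSpace ℝ F]
    [PartialOrder F] [CovariantClass F F (· + ·) (· ≤ ·)]
    (hsmulF : ∀ (c : ℝ) (x : F), 0 ≤ c → 0 ≤ x → 0 ≤ c • x)
    (hmonoF : ∀ x y : F, 0 ≤ x → x ≤ y → ‖x‖ ≤ ‖y‖)
    (hcompF : ∀ S : Set F, S.Nonempty → BddAbove S → ∃ b, IsLUB S b)
    (Φ : E → F)
    (hconv : ∀ x y : E, ∀ t : ℝ, 0 ≤ t → t ≤ 1 →
      Φ ((1 - t) • x + t • y) ≤ (1 - t) • Φ x + t • Φ y)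
    (hcont : ContinuousAt Φ 0)
    (H : Submodule ℝ E) (T_H : H →ₗ[ℝ] F)
    (hTH : ∀ x : H, T_H x ≤ Φ x) :
    ∃ T : E →L[ℝ] F, (∀ x : H, T x = T_H x) ∧ ∀ x : E, T x ≤ Φ x := by
  have : IsOrderedAddMonoid F := { add_le_add_left := fun _ _ h c => add_le_add_left h c }
  have : PosSMulMono ℝ F := .of_smul_nonneg fun c hc x hx => hsmulF c x hc hx
  have hΦ : ConvexOn ℝ univ Φ := ⟨convex_univ, fun x _ y _ a b ha hb hab => by
    obtain rfl : a = 1 - b := eq_sub_of_add_eq hab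
    exact hconv x y b hb (sub_nonneg.1 ha)⟩
  obtain ⟨T, hT_ext, hT_le⟩ := hΦ.exists_linearMap_extension_le hcompF T_H hTH
  exact ⟨⟨T, T.continuous_of_le_of_continuousAt hmonoF hcont hT_le⟩, hT_ext, hT_le⟩

/-- (Topological Hahn–Banach) Let `Φ` be a convex function from a real
Banach space `E` into an order complete Banach space `F` with `Φ 0 = 0` and `Φ`
continuous at the origin. Any linear operator `T_H` on a subspace `H` with `T_H ≤ Φ`
on `H` extends to a continuous linear operator `T : E → F` with `T ≤ Φ` on `E`. -/
theorem generalized_hahn_banach_extension_continuous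
    {E F : Type*}
    [NormedAddCommGroup E] [NormedSpace ℝ E] [CompleteSpace E]
    [NormedAddCommGroup F] [NormedSpace ℝ F] [CompleteSpace F]
    [PartialOrder F] [CovariantClass F F (· + ·) (· ≤ ·)]
    (hsmulF : ∀ (c : ℝ) (x : F), 0 ≤ c → 0 ≤ x → 0 ≤ c • x)
    (hclosedF : IsClosed {x : F | 0 ≤ x})
    (hgenF : ∀ x : F, ∃ u v : F, 0 ≤ u ∧ 0 ≤ v ∧ x = u - v)
    (hmonoF : ∀ x y : F, 0 ≤ x → x ≤ y → ‖x‖ ≤ ‖y‖)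
    (hcompF : ∀ S : Set F, S.Nonempty → BddAbove S → ∃ b, IsLUB S b)
    (Φ : E → F)
    (hconv : ∀ x y : E, ∀ t : ℝ, 0 ≤ t → t ≤ 1 →
      Φ ((1 - t) • x + t • y) ≤ (1 - t) • Φ x + t • Φ y)
    (hΦ0 : Φ 0 = 0) (hcont : ContinuousAt Φ 0)
    (H : Submodule ℝ E) (T_H : H →ₗ[ℝ] F)
    (hTH : ∀ x : H, T_H x ≤ Φ x) :
    ∃ T : E →L[ℝ] F, (∀ x : H, T x = T_H x) ∧ ∀ x : E, T x ≤ Φ x :=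
  generalized_hahn_banach_extension_continuous_general hsmulF hmonoF hcompF Φ hconv hcont H T_H hTH
end

section
/- Let Φ be a convex function defined on a real Banach space E taking values in an order complete Banach space F. Then at every point x₀ at which Φ is continuous the subdifferential ∂_{x₀}Φ is nonempty: there exists a continuous linear operator T : E → F such that Φ(x) ≥ Φ(x₀) + T(x - x₀) for all x ∈ E. -/
/-!
Vector-valued Hahn–Banach by Zorn's lemma: a linear map on a subspace dominated by the convex
function `g` extends to one more direction `e`, because by convexity every "left slope"
`s⁻¹ • (f m - g (m - s • e))` lies below every "right slope" `t⁻¹ • (g (m + t • e) - f m)`,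
and order completeness supplies a value `r` in between. Applied to `u ↦ Φ (x₀ + u) - Φ x₀`
this gives a linear subgradient `T`. It is continuous since
`-(Φ (x₀ - u) - Φ x₀) ≤ T u ≤ Φ (x₀ + u) - Φ x₀`, and monotonicity of the norm turns this into a
bound for `‖T u‖` on a neighbourhood of `0`.
-/

open Set Topology

section ConvexDomination

variable {E F : Type*} [AddCommGroup E] [Module ℝ E] [AddCommGroup F] [PartialOrder F] [Module ℝ F]
  {g : E → F}

theorem convexOn_univ_of_forall
    (h : ∀ x y : E, ∀ t : ℝ, 0 ≤ t → t ≤ 1 → g ((1 - t) • x + t • y) ≤ (1 - t) • g x + t • g y) :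
    ConvexOn ℝ univ g := by
  refine ⟨convex_univ, fun x _ y _ a b ha hb hab => ?_⟩
  obtain rfl : a = 1 - b := by linarith
  exact h x y b hb (by linarith)

namespace LinearPMap

theorem sSup_le_of_forall_le {c : Set (E →ₗ.[ℝ] F)} (hc : DirectedOn (· ≤ ·) c) (hne : c.Nonempty)
    (h : ∀ f ∈ c, ∀ x : f.domain, f x ≤ g x) (x : (LinearPMap.sSup c hc).domain) :
    LinearPMap.sSup c hc x ≤ g x := by
  have hdir : DirectedOn (· ≤ ·) (LinearPMap.domain '' c) :=
    directedOn_image.2 (hc.mono LinearPMap.domain_mono.monotone)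
  obtain ⟨_, ⟨f, hfc, rfl⟩, hxf⟩ := (Submodule.mem_sSup_of_directed (hne.image _) hdir).1 x.2
  rw [LinearPMap.sSup_apply hc hfc ⟨x, hxf⟩]
  exact h f hfc ⟨x, hxf⟩

variable [IsOrderedAddMonoid F] [PosSMulMono ℝ F] {f : E →ₗ.[ℝ] F}

theorem inv_smul_sub_le_inv_smul_sub_of_convexOn (hg : ConvexOn ℝ univ g)
    (hf : ∀ x : f.domain, f x ≤ g x) (e : E) (m₁ m₂ : f.domain) {s t : ℝ} (hs : 0 < s)
    (ht : 0 < t) :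
    s⁻¹ • (f m₂ - g (m₂ - s • e)) ≤ t⁻¹ • (g (m₁ + t • e) - f m₁) := by
  have hst : 0 < s + t := add_pos hs ht
  have hconv := hg.2 (mem_univ ((m₂ : E) - s • e)) (mem_univ ((m₁ : E) + t • e))
    (div_pos ht hst).le (div_pos hs hst).le (by field_simp; ring)
  have hcomb : (t / (s + t)) • ((m₂ : E) - s • e) + (s / (s + t)) • ((m₁ : E) + t • e) =
      ((t / (s + t)) • m₂ + (s / (s + t)) • m₁ : f.domain) := by
    simp only [Submodule.coe_add, Submodule.coe_smul]
    match_scalars <;> field_simp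
    ring
  rw [hcomb] at hconv
  have hdom := (hf _).trans hconv
  rw [f.map_add, f.map_smul, f.map_smul] at hdom
  have hscaled := smul_le_smul_of_nonneg_left hdom (by positivity : 0 ≤ (s + t) / (s * t))
  simp only [smul_add, smul_smul] at hscaled
  rw [show (s + t) / (s * t) * (t / (s + t)) = s⁻¹ by field_simp,
    show (s + t) / (s * t) * (s / (s + t)) = t⁻¹ by field_simp] at hscaled
  rw [smul_sub, smul_sub, sub_le_sub_iff, add_comm (t⁻¹ • g _)]
  exact hscaled

theorem add_smul_le_of_slope_bounds {e : E} {r : F}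
    (hlower : ∀ (m : f.domain) (s : ℝ), 0 < s → s⁻¹ • (f m - g (m - s • e)) ≤ r)
    (hupper : ∀ (m : f.domain) (t : ℝ), 0 < t → r ≤ t⁻¹ • (g (m + t • e) - f m))
    (hf : ∀ x : f.domain, f x ≤ g x) (m : f.domain) (c : ℝ) :
    f m + c • r ≤ g (m + c • e) := by
  rcases lt_trichotomy c 0 with hc | rfl | hc
  · have h := (inv_smul_le_iff_of_pos (neg_pos.2 hc)).1 (hlower m (-c) (neg_pos.2 hc))
    rw [neg_smul, neg_smul, sub_neg_eq_add, sub_le_iff_le_add, neg_add_eq_sub,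
      le_sub_iff_add_le] at h
    exact h
  · simpa using hf m
  · have h := (le_inv_smul_iff_of_pos hc).1 (hupper m c hc)
    rwa [le_sub_iff_add_le'] at h

theorem exists_supSpanSingleton_le_of_convexOn
    (hcomp : ∀ S : Set F, S.Nonempty → BddAbove S → ∃ b, IsLUB S b)
    (hg : ConvexOn ℝ univ g) (hf : ∀ x : f.domain, f x ≤ g x) {e : E} (he : e ∉ f.domain) :
    ∃ r, ∀ x : (f.supSpanSingleton e r he).domain, f.supSpanSingleton e r he x ≤ g x := by
  set lower : Set F := range fun p : f.domain × Ioi (0 : ℝ) =>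
    (p.2 : ℝ)⁻¹ • (f p.1 - g (p.1 - (p.2 : ℝ) • e))
  have hupper : ∀ (m : f.domain) (t : ℝ), 0 < t →
      t⁻¹ • (g (m + t • e) - f m) ∈ upperBounds lower := by
    rintro m t ht _ ⟨⟨m', s, hs⟩, rfl⟩
    exact inv_smul_sub_le_inv_smul_sub_of_convexOn hg hf e m m' hs ht
  obtain ⟨r, hr⟩ := hcomp lower (range_nonempty _) ⟨_, hupper 0 1 one_pos⟩
  refine ⟨r, ?_⟩
  rintro ⟨x, hx⟩
  obtain ⟨m, hm, _, hy, rfl⟩ := Submodule.mem_sup.1 hx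
  obtain ⟨c, rfl⟩ := Submodule.mem_span_singleton.1 hy
  rw [f.supSpanSingleton_apply_mk e r he m hm c]
  exact add_smul_le_of_slope_bounds (fun m s hs => hr.1 ⟨(m, ⟨s, hs⟩), rfl⟩)
    (fun m t ht => hr.2 (hupper m t ht)) hf ⟨m, hm⟩ c

end LinearPMap

variable [IsOrderedAddMonoid F] [PosSMulMono ℝ F]

theorem exists_linearMap_le_of_convexOn
    (hcomp : ∀ S : Set F, S.Nonempty → BddAbove S → ∃ b, IsLUB S b)
    (hg : ConvexOn ℝ univ g) (hg0 : 0 ≤ g 0) : ∃ T : E →ₗ[ℝ] F, ∀ x, T x ≤ g x := by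
  set S : Set (E →ₗ.[ℝ] F) := {f | ∀ x : f.domain, f x ≤ g x}
  have hchain : ∀ c ⊆ S, IsChain (· ≤ ·) c → ∀ y ∈ c, ∃ ub ∈ S, ∀ z ∈ c, z ≤ ub :=
    fun c hcS hc y hy => ⟨LinearPMap.sSup c hc.directedOn,
      LinearPMap.sSup_le_of_forall_le hc.directedOn ⟨y, hy⟩ hcS,
      fun _ hz => LinearPMap.le_sSup hc.directedOn hz⟩
  have hzero : (⟨⊥, 0⟩ : E →ₗ.[ℝ] F) ∈ S := by
    rintro ⟨x, hx⟩
    obtain rfl := (Submodule.mem_bot ℝ).1 hx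
    simpa using hg0
  obtain ⟨f, -, hfS, hfmax⟩ := zorn_le_nonempty₀ S hchain _ hzero
  have htop : ∀ x, x ∈ f.domain := by
    by_contra! ⟨e, he⟩
    obtain ⟨r, hr⟩ := LinearPMap.exists_supSpanSingleton_le_of_convexOn hcomp hg hfS he
    exact he ((hfmax hr (f.left_le_sup _ _)).1
      (Submodule.mem_sup_right (Submodule.mem_span_singleton_self e)))
  exact ⟨⟨⟨fun x => f ⟨x, htop x⟩, fun x y => f.map_add ⟨x, htop x⟩ ⟨y, htop y⟩⟩,
    fun c x => f.map_smul c ⟨x, htop x⟩⟩, fun x => hfS ⟨x, htop x⟩⟩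

theorem exists_linearMap_subgradient_of_convexOn
    (hcomp : ∀ S : Set F, S.Nonempty → BddAbove S → ∃ b, IsLUB S b)
    (hg : ConvexOn ℝ univ g) (x₀ : E) : ∃ T : E →ₗ[ℝ] F, ∀ x, g x₀ + T (x - x₀) ≤ g x := by
  have hshift : ConvexOn ℝ univ fun u => g (x₀ + u) + -g x₀ :=
    (hg.translate_right x₀).add_const (-g x₀)
  obtain ⟨T, hT⟩ := exists_linearMap_le_of_convexOn hcomp hshift (by simp)
  refine ⟨T, fun x => ?_⟩
  simpa [← sub_eq_add_neg, le_sub_iff_add_le'] using hT (x - x₀)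

end ConvexDomination

section MonotoneNorm

variable {E F : Type*} [NormedAddCommGroup F] [PartialOrder F] [IsOrderedAddMonoid F]

theorem norm_le_of_neg_le_of_le (hmono : ∀ x y : F, 0 ≤ x → x ≤ y → ‖x‖ ≤ ‖y‖) {a b c : F}
    (hba : -b ≤ a) (hac : a ≤ c) : ‖a‖ ≤ ‖c‖ + 2 * ‖b‖ := by
  have hnorm := hmono (a + b) (c + b) (neg_le_iff_add_nonneg.1 hba) (add_le_add_left hac b)
  calc ‖a‖ = ‖a + b - b‖ := by rw [add_sub_cancel_right]
    _ ≤ ‖a + b‖ + ‖b‖ := norm_sub_le _ _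
    _ ≤ ‖c‖ + ‖b‖ + ‖b‖ := by grw [hnorm, norm_add_le]
    _ = ‖c‖ + 2 * ‖b‖ := by ring

variable [NormedAddCommGroup E] [NormedSpace ℝ E] [NormedSpace ℝ F]

theorem LinearMap.continuous_of_le_of_continuousAt_zero
    (hmono : ∀ x y : F, 0 ≤ x → x ≤ y → ‖x‖ ≤ ‖y‖) (T : E →ₗ[ℝ] F) {h : E → F}
    (hT : ∀ u, T u ≤ h u) (hh : ContinuousAt h 0) : Continuous T := by
  set C := ‖h 0‖ + 1
  have hV : {u | ‖h u‖ < C} ∈ 𝓝 (0 : E) :=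
    hh.norm.eventually (gt_mem_nhds (lt_add_one _))
  have hbdd : ∀ u ∈ {u | ‖h u‖ < C} ∩ -{u | ‖h u‖ < C}, ‖T u‖ ≤ C + 2 * C := by
    rintro u ⟨hu, hnu : ‖h (-u)‖ < C⟩
    have hlower : -h (-u) ≤ T u := by simpa using neg_le_neg (hT (-u))
    linarith [norm_le_of_neg_le_of_le hmono hlower (hT u), show ‖h u‖ < C from hu]
  exact (T.clmOfExistsBoundedImage ⟨_, Filter.inter_mem hV (neg_mem_nhds_zero _ hV),
    (NormedSpace.image_isVonNBounded_iff ℝ).2 ⟨_, hbdd⟩⟩).continuous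

theorem LinearMap.continuous_of_subgradient (hmono : ∀ x y : F, 0 ≤ x → x ≤ y → ‖x‖ ≤ ‖y‖)
    (T : E →ₗ[ℝ] F) {g : E → F} {x₀ : E} (hT : ∀ x, g x₀ + T (x - x₀) ≤ g x)
    (hg : ContinuousAt g x₀) : Continuous T := by
  refine T.continuous_of_le_of_continuousAt_zero hmono (h := fun u => g (x₀ + u) - g x₀)
    (fun u => ?_) ?_
  · simpa [le_sub_iff_add_le'] using hT (x₀ + u)
  · exact (hg.comp_of_eq (continuous_const_add x₀).continuousAt (add_zero x₀)).sub
      continuousAt_const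

end MonotoneNorm

theorem subdifferential_nonempty_at_continuity_point_general
    {E F : Type*}
    [NormedAddCommGroup E] [NormedSpace ℝ E]
    [NormedAddCommGroup F] [NormedSpace ℝ F]
    [PartialOrder F] [CovariantClass F F (· + ·) (· ≤ ·)]
    (hsmulF : ∀ (c : ℝ) (x : F), 0 ≤ c → 0 ≤ x → 0 ≤ c • x)
    (hmonoF : ∀ x y : F, 0 ≤ x → x ≤ y → ‖x‖ ≤ ‖y‖)
    (hcompF : ∀ S : Set F, S.Nonempty → BddAbove S → ∃ b, IsLUB S b)
    (Φ : E → F)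
    (hconv : ∀ x y : E, ∀ t : ℝ, 0 ≤ t → t ≤ 1 →
      Φ ((1 - t) • x + t • y) ≤ (1 - t) • Φ x + t • Φ y)
    (x₀ : E) (hcont : ContinuousAt Φ x₀) :
    ∃ T : E →L[ℝ] F, ∀ x : E, Φ x₀ + T (x - x₀) ≤ Φ x := by
  have : IsOrderedAddMonoid F := { add_le_add_left := fun _ _ hab c => add_le_add_left hab c }
  have : PosSMulMono ℝ F := .of_smul_nonneg fun c hc x hx => hsmulF c x hc hx
  obtain ⟨T, hT⟩ :=
    exists_linearMap_subgradient_of_convexOn hcompF (convexOn_univ_of_forall hconv) x₀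
  exact ⟨⟨T, T.continuous_of_subgradient hmonoF hT hcont⟩, hT⟩

/-- A convex function `Φ` from a Banach space `E` into an order complete
Banach space `F` has a nonempty subdifferential at every point of continuity. -/
theorem subdifferential_nonempty_at_continuity_point
    {E F : Type*}
    [NormedAddCommGroup E] [NormedSpace ℝ E] [CompleteSpace E]
    [NormedAddCommGroup F] [NormedSpace ℝ F] [CompleteSpace F]
    [PartialOrder F] [CovariantClass F F (· + ·) (· ≤ ·)]
    (hsmulF : ∀ (c : ℝ) (x : F), 0 ≤ c → 0 ≤ x → 0 ≤ c • x)
    (hclosedF : IsClosed {x : F | 0 ≤ x})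
    (hgenF : ∀ x : F, ∃ u v : F, 0 ≤ u ∧ 0 ≤ v ∧ x = u - v)
    (hmonoF : ∀ x y : F, 0 ≤ x → x ≤ y → ‖x‖ ≤ ‖y‖)
    (hcompF : ∀ S : Set F, S.Nonempty → BddAbove S → ∃ b, IsLUB S b)
    (Φ : E → F)
    (hconv : ∀ x y : E, ∀ t : ℝ, 0 ≤ t → t ≤ 1 →
      Φ ((1 - t) • x + t • y) ≤ (1 - t) • Φ x + t • Φ y)
    (x₀ : E) (hcont : ContinuousAt Φ x₀) :
    ∃ T : E →L[ℝ] F, ∀ x : E, Φ x₀ + T (x - x₀) ≤ Φ x :=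
  subdifferential_nonempty_at_continuity_point_general hsmulF hmonoF hcompF Φ hconv x₀ hcont
end

section
/- Let E and F be ordered Banach spaces, let Φ : E → F be an isotone function (x ≤ y implies Φ(x) ≤ Φ(y)), and let T : E → F be a linear operator such that T(x) ≤ Φ(x) for all x ∈ E. Then T is a positive operator (T(x) ≥ 0 for all x ≥ 0), and consequently T is continuous. -/
/-!
For `x ≥ 0` and `t > 0` we have `-(t • T x) = T (-(t • x)) ≤ Φ (-(t • x)) ≤ Φ 0`, so
`-(t⁻¹ • Φ 0) ≤ T x`; letting `t → ∞` in the closed cone of `F` gives `0 ≤ T x`.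

A positive `T` is bounded on the positive part of the unit ball: otherwise pick `xₖ ≥ 0` there
with `‖T xₖ‖ > k 2ᵏ`; the sum `w` of the series `∑ 2⁻ᵏ xₖ` dominates each term, and normality of
the cone of `F` gives `‖T w‖ > k` for every `k`. Andô's theorem, that every `x` is `u - v` with
`u, v ≥ 0` and `‖u‖ + ‖v‖ ≤ C ‖x‖`, turns this into a global bound. Andô's theorem itself comes
from Baire's theorem, which makes the closure of some `{u - v : u, v ≥ 0, ‖u‖ + ‖v‖ ≤ n}` a
neighbourhood of `0`, followed by the successive approximations of the open mapping theorem.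
-/

open Filter Topology Metric Set

theorem closure_mem_nhds_zero_of_convex_of_neg_eq {E : Type*} [AddCommGroup E] [Module ℝ E]
    [TopologicalSpace E] [IsTopologicalAddGroup E] [ContinuousSMul ℝ E] {s : Set E}
    (hconv : Convex ℝ s) (hneg : -s = s) (hint : (interior (closure s)).Nonempty) :
    closure s ∈ 𝓝 0 := by
  obtain ⟨x, hx⟩ := hint
  have hx' : -x ∈ interior (closure s) := by
    rw [mem_interior_iff_mem_nhds, nhds_neg, Filter.mem_neg]
    change -closure s ∈ 𝓝 x
    rw [neg_closure, hneg]
    exact mem_interior_iff_mem_nhds.1 hx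
  have h0 := hconv.closure.interior hx hx' (a := 1 / 2) (b := 1 / 2) (by norm_num) (by norm_num)
    (by norm_num)
  rw [← smul_add, add_neg_cancel, smul_zero] at h0
  exact mem_interior_iff_mem_nhds.1 h0

theorem norm_iterate_sub_le {E : Type*} [NormedAddCommGroup E] {g : E → E} {q : ℝ}
    (hq₀ : 0 ≤ q) (hg : ∀ y, ‖y - g y‖ ≤ q * ‖y‖) (x : E) (k : ℕ) :
    ‖(fun y ↦ y - g y)^[k] x‖ ≤ q ^ k * ‖x‖ := by
  induction k with
  | zero => simp
  | succ k ih =>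
    rw [Function.iterate_succ_apply']
    calc _ ≤ q * ‖(fun y ↦ y - g y)^[k] x‖ := hg _
      _ ≤ q * (q ^ k * ‖x‖) := by gcongr
      _ = q ^ (k + 1) * ‖x‖ := by ring

theorem hasSum_iterate_sub {E : Type*} [NormedAddCommGroup E] {g : E → E} {q : ℝ}
    (hq₀ : 0 ≤ q) (hq₁ : q < 1) (hg : ∀ y, ‖y - g y‖ ≤ q * ‖y‖) (x : E) :
    HasSum (fun k ↦ g ((fun y ↦ y - g y)^[k] x)) x := by
  set y : ℕ → E := fun k ↦ (fun y ↦ y - g y)^[k] x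
  have hy : ∀ k, ‖y k‖ ≤ q ^ k * ‖x‖ := norm_iterate_sub_le hq₀ hg x
  have hgy : ∀ k, g (y k) = y k - y (k + 1) := by
    intro k
    simp only [y, Function.iterate_succ_apply', sub_sub_cancel]
  have hy0 : Tendsto y atTop (𝓝 0) :=
    squeeze_zero_norm hy <| by
      simpa using (tendsto_pow_atTop_nhds_zero_of_lt_one hq₀ hq₁).mul_const ‖x‖
  have hsummable : Summable fun k ↦ ‖g (y k)‖ := by
    refine .of_nonneg_of_le (fun _ ↦ norm_nonneg _) (fun k ↦ ?_)
      (((summable_geometric_of_lt_one hq₀ hq₁).mul_right (‖x‖ * (1 + q))))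
    calc ‖g (y k)‖ ≤ ‖y k‖ + ‖y (k + 1)‖ := by rw [hgy]; exact norm_sub_le _ _
      _ ≤ q ^ k * ‖x‖ + q ^ (k + 1) * ‖x‖ := add_le_add (hy k) (hy (k + 1))
      _ = q ^ k * (‖x‖ * (1 + q)) := by ring
  rw [hasSum_iff_tendsto_nat_of_summable_norm hsummable]
  simp_rw [hgy, Finset.sum_range_sub']
  simpa [y] using (tendsto_const_nhds (x := y 0)).sub hy0

section NonnegDiffs

variable {E : Type*} [NormedAddCommGroup E] [PartialOrder E]

def nonnegDiffs (c : ℝ) : Set E :=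
  {x | ∃ u v : E, 0 ≤ u ∧ 0 ≤ v ∧ ‖u‖ + ‖v‖ ≤ c ∧ x = u - v}

theorem zero_mem_nonnegDiffs {c : ℝ} (hc : 0 ≤ c) : (0 : E) ∈ nonnegDiffs c :=
  ⟨0, 0, le_rfl, le_rfl, by simpa using hc, (sub_zero 0).symm⟩

theorem neg_nonnegDiffs (c : ℝ) : -(nonnegDiffs c : Set E) = nonnegDiffs c := by
  ext x
  constructor
  · rintro ⟨u, v, hu, hv, huv, hx⟩
    exact ⟨v, u, hv, hu, by linarith, by rw [← neg_neg x, hx, neg_sub]⟩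
  · rintro ⟨u, v, hu, hv, huv, rfl⟩
    exact ⟨v, u, hv, hu, by linarith, neg_sub u v⟩

theorem add_mem_nonnegDiffs [IsOrderedAddMonoid E] {x y : E} {c d : ℝ}
    (hx : x ∈ nonnegDiffs c) (hy : y ∈ nonnegDiffs d) : x + y ∈ nonnegDiffs (c + d) := by
  obtain ⟨u, v, hu, hv, huv, rfl⟩ := hx
  obtain ⟨u', v', hu', hv', huv', rfl⟩ := hy
  refine ⟨u + u', v + v', add_nonneg hu hu', add_nonneg hv hv', ?_, by abel⟩
  linarith [norm_add_le u u', norm_add_le v v']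

theorem smul_mem_nonnegDiffs [NormedSpace ℝ E] [PosSMulMono ℝ E] {x : E} {c t : ℝ} (ht : 0 ≤ t)
    (hx : x ∈ nonnegDiffs c) : t • x ∈ nonnegDiffs (t * c) := by
  obtain ⟨u, v, hu, hv, huv, rfl⟩ := hx
  refine ⟨t • u, t • v, smul_nonneg ht hu, smul_nonneg ht hv, ?_, smul_sub t u v⟩
  rw [norm_smul, norm_smul, Real.norm_of_nonneg ht, ← mul_add]
  exact mul_le_mul_of_nonneg_left huv ht

theorem convex_nonnegDiffs [NormedSpace ℝ E] [IsOrderedAddMonoid E] [PosSMulMono ℝ E] (c : ℝ) :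
    Convex ℝ (nonnegDiffs c : Set E) := by
  intro x hx y hy a b ha hb hab
  simpa [← add_mul, hab] using
    add_mem_nonnegDiffs (smul_mem_nonnegDiffs ha hx) (smul_mem_nonnegDiffs hb hy)

theorem exists_closure_nonnegDiffs_mem_nhds [NormedSpace ℝ E] [IsOrderedAddMonoid E]
    [PosSMulMono ℝ E] [CompleteSpace E] (hgen : ∀ x : E, ∃ u v : E, 0 ≤ u ∧ 0 ≤ v ∧ x = u - v) :
    ∃ n : ℕ, closure (nonnegDiffs n : Set E) ∈ 𝓝 0 := by
  have hcover : ⋃ n : ℕ, closure (nonnegDiffs n : Set E) = univ := by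
    refine eq_univ_of_forall fun x ↦ ?_
    obtain ⟨u, v, hu, hv, rfl⟩ := hgen x
    exact mem_iUnion.2 ⟨⌈‖u‖ + ‖v‖⌉₊, subset_closure ⟨u, v, hu, hv, Nat.le_ceil _, rfl⟩⟩
  obtain ⟨n, hn⟩ := nonempty_interior_of_iUnion_of_closed (fun _ ↦ isClosed_closure) hcover
  exact ⟨n, closure_mem_nhds_zero_of_convex_of_neg_eq (convex_nonnegDiffs _)
    (neg_nonnegDiffs _) hn⟩

theorem exists_mem_closure_nonnegDiffs [NormedSpace ℝ E] [IsOrderedAddMonoid E]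
    [PosSMulMono ℝ E] [CompleteSpace E] (hgen : ∀ x : E, ∃ u v : E, 0 ≤ u ∧ 0 ≤ v ∧ x = u - v) :
    ∃ K, 0 ≤ K ∧ ∀ y : E, y ∈ closure (nonnegDiffs (K * ‖y‖)) := by
  obtain ⟨n, hn⟩ := exists_closure_nonnegDiffs_mem_nhds hgen
  obtain ⟨r, hr, hball⟩ := Metric.mem_nhds_iff.1 hn
  refine ⟨2 * n / r, by positivity, fun y ↦ ?_⟩
  rcases eq_or_ne y 0 with rfl | hy
  · exact subset_closure (zero_mem_nonnegDiffs (by simp))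
  set t := 2 * ‖y‖ / r
  have ht : 0 < t := by positivity
  have hz : t⁻¹ • y ∈ ball (0 : E) r := by
    rw [mem_ball_zero_iff, norm_smul, norm_inv, Real.norm_of_nonneg ht.le]
    have : t⁻¹ * ‖y‖ = r / 2 := by simp only [t]; field_simp
    linarith
  have := map_mem_closure (continuous_const_smul t) (hball hz)
    fun _ ↦ smul_mem_nonnegDiffs ht.le
  rwa [smul_inv_smul₀ ht.ne', show t * n = 2 * n / r * ‖y‖ by ring] at this

theorem mem_nonnegDiffs_of_hasSum [IsOrderedAddMonoid E] [OrderClosedTopology E]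
    [CompleteSpace E] {u v : ℕ → E} {b : ℕ → ℝ} {c : ℝ} {x : E} (hu : ∀ k, 0 ≤ u k)
    (hv : ∀ k, 0 ≤ v k) (hb : HasSum b c) (huv : ∀ k, ‖u k‖ + ‖v k‖ ≤ b k)
    (hx : HasSum (fun k ↦ u k - v k) x) : x ∈ nonnegDiffs c := by
  have hu' : Summable fun k ↦ ‖u k‖ := hb.summable.of_nonneg_of_le (fun _ ↦ norm_nonneg _)
    fun k ↦ by linarith [huv k, norm_nonneg (v k)]
  have hv' : Summable fun k ↦ ‖v k‖ := hb.summable.of_nonneg_of_le (fun _ ↦ norm_nonneg _)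
    fun k ↦ by linarith [huv k, norm_nonneg (u k)]
  refine ⟨∑' k, u k, ∑' k, v k, tsum_nonneg hu, tsum_nonneg hv, ?_,
    hx.unique (hu'.of_norm.hasSum.sub hv'.of_norm.hasSum)⟩
  calc ‖∑' k, u k‖ + ‖∑' k, v k‖ ≤ ∑' k, ‖u k‖ + ∑' k, ‖v k‖ :=
        add_le_add (norm_tsum_le_tsum_norm hu') (norm_tsum_le_tsum_norm hv')
    _ ≤ c := hasSum_le huv (hu'.hasSum.add hv'.hasSum) hb

theorem exists_forall_mem_nonnegDiffs [NormedSpace ℝ E] [IsOrderedAddMonoid E]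
    [PosSMulMono ℝ E] [OrderClosedTopology E] [CompleteSpace E]
    (hgen : ∀ x : E, ∃ u v : E, 0 ≤ u ∧ 0 ≤ v ∧ x = u - v) :
    ∃ C, ∀ x : E, x ∈ nonnegDiffs (C * ‖x‖) := by
  obtain ⟨K, hK, hclosure⟩ := exists_mem_closure_nonnegDiffs hgen
  have happrox : ∀ y : E, ∃ u v : E, 0 ≤ u ∧ 0 ≤ v ∧ ‖u‖ + ‖v‖ ≤ K * ‖y‖ ∧
      ‖y - (u - v)‖ ≤ (1 / 2) * ‖y‖ := by
    intro y
    rcases eq_or_ne y 0 with rfl | hy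
    · exact ⟨0, 0, le_rfl, le_rfl, by simp, by simp⟩
    obtain ⟨z, ⟨u, v, hu, hv, huv, rfl⟩, hyz⟩ :=
      Metric.mem_closure_iff.1 (hclosure y) ((1 / 2) * ‖y‖) (by positivity)
    exact ⟨u, v, hu, hv, huv, by rw [← dist_eq_norm]; exact hyz.le⟩
  choose U V hU hV hUV happrox using happrox
  refine ⟨2 * K, fun x ↦ ?_⟩
  rw [show 2 * K * ‖x‖ = K * ‖x‖ * 2 by ring]
  set y : ℕ → E := fun k ↦ (fun y ↦ y - (U y - V y))^[k] x
  have hy : ∀ k, ‖y k‖ ≤ (1 / 2) ^ k * ‖x‖ := norm_iterate_sub_le (by norm_num) happrox x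
  refine mem_nonnegDiffs_of_hasSum (fun k ↦ hU (y k)) (fun k ↦ hV (y k))
    (hasSum_geometric_two.mul_left (K * ‖x‖)) (fun k ↦ ?_)
    (hasSum_iterate_sub (by norm_num) (by norm_num) happrox x)
  calc ‖U (y k)‖ + ‖V (y k)‖ ≤ K * ‖y k‖ := hUV (y k)
    _ ≤ K * ((1 / 2) ^ k * ‖x‖) := by gcongr; exact hy k
    _ = K * ‖x‖ * (1 / 2) ^ k := by ring

end NonnegDiffs

namespace LinearMap

variable {E F : Type*} [NormedAddCommGroup E] [NormedSpace ℝ E] [PartialOrder E]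
  [IsOrderedAddMonoid E] [PosSMulMono ℝ E]
  [NormedAddCommGroup F] [NormedSpace ℝ F] [PartialOrder F] [IsOrderedAddMonoid F]

theorem map_nonneg_of_le_monotone [PosSMulMono ℝ F] [OrderClosedTopology F] (T : E →ₗ[ℝ] F)
    {Φ : E → F} (hΦ : Monotone Φ) (hT : ∀ x, T x ≤ Φ x) {x : E} (hx : 0 ≤ x) : 0 ≤ T x := by
  have hbound : ∀ t : ℝ, 0 < t → -(t⁻¹ • Φ 0) ≤ T x := by
    intro t ht
    have h : -(t • T x) ≤ Φ 0 :=
      calc -(t • T x) = T (-(t • x)) := by rw [map_neg, map_smul]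
        _ ≤ Φ (-(t • x)) := hT _
        _ ≤ Φ 0 := hΦ (neg_nonpos.2 (smul_nonneg ht.le hx))
    have := smul_le_smul_of_nonneg_left h (inv_nonneg.2 ht.le)
    rwa [smul_neg, inv_smul_smul₀ ht.ne', neg_le] at this
  refine le_of_tendsto ?_ ((eventually_gt_atTop (0 : ℝ)).mono hbound)
  simpa using ((tendsto_inv_atTop_zero (𝕜 := ℝ)).smul_const (Φ 0)).neg

theorem exists_norm_map_le_of_nonneg_of_norm_le_one [CompleteSpace E] [OrderClosedTopology E]
    (hmono : ∀ x y : F, 0 ≤ x → x ≤ y → ‖x‖ ≤ ‖y‖) (T : E →ₗ[ℝ] F)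
    (hT : ∀ x, 0 ≤ x → 0 ≤ T x) : ∃ M, ∀ x, 0 ≤ x → ‖x‖ ≤ 1 → ‖T x‖ ≤ M := by
  by_contra! h
  choose x hx hx1 hTx using fun k : ℕ ↦ h (k * 2 ^ k)
  set y : ℕ → E := fun k ↦ (1 / 2 : ℝ) ^ k • x k
  have hy : ∀ k, 0 ≤ y k := fun k ↦ smul_nonneg (by positivity) (hx k)
  have hsum : Summable y := by
    refine summable_geometric_two.of_norm_bounded fun k ↦ ?_
    rw [norm_smul, Real.norm_of_nonneg (by positivity)]
    exact mul_le_of_le_one_right (by positivity) (hx1 k)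
  have hTy : ∀ k : ℕ, k < ‖T (y k)‖ := by
    intro k
    rw [map_smul, norm_smul, Real.norm_of_nonneg (by positivity)]
    calc (k : ℝ) = (1 / 2) ^ k * (k * 2 ^ k) := by rw [mul_left_comm, ← mul_pow]; norm_num
      _ < (1 / 2) ^ k * ‖T (x k)‖ := by gcongr; exact hTx k
  obtain ⟨k, hk⟩ := exists_nat_gt ‖T (∑' k, y k)‖
  have hle : ‖T (y k)‖ ≤ ‖T (∑' k, y k)‖ :=
    hmono _ _ (hT _ (hy k))
      ((monotone_iff_map_nonneg T).2 hT (le_hasSum hsum.hasSum k fun j _ ↦ hy j))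
  linarith [hTy k]

theorem exists_norm_map_le_mul_of_nonneg [CompleteSpace E] [OrderClosedTopology E]
    (hmono : ∀ x y : F, 0 ≤ x → x ≤ y → ‖x‖ ≤ ‖y‖) (T : E →ₗ[ℝ] F)
    (hT : ∀ x, 0 ≤ x → 0 ≤ T x) : ∃ M, 0 ≤ M ∧ ∀ x, 0 ≤ x → ‖T x‖ ≤ M * ‖x‖ := by
  obtain ⟨M, hM⟩ := exists_norm_map_le_of_nonneg_of_norm_le_one hmono T hT
  refine ⟨M, by simpa using hM 0 le_rfl (by simp), fun x hx ↦ ?_⟩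
  rcases eq_or_ne x 0 with rfl | hx0
  · simp
  have hx' : 0 < ‖x‖ := norm_pos_iff.2 hx0
  have h := hM (‖x‖⁻¹ • x) (smul_nonneg (by positivity) hx)
    (by rw [norm_smul, norm_inv, norm_norm, inv_mul_cancel₀ hx'.ne'])
  rw [map_smul, norm_smul, norm_inv, norm_norm, inv_mul_le_iff₀ hx'] at h
  linarith

theorem continuous_of_map_nonneg [CompleteSpace E] [OrderClosedTopology E]
    (hgen : ∀ x : E, ∃ u v : E, 0 ≤ u ∧ 0 ≤ v ∧ x = u - v)
    (hmono : ∀ x y : F, 0 ≤ x → x ≤ y → ‖x‖ ≤ ‖y‖) (T : E →ₗ[ℝ] F)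
    (hT : ∀ x, 0 ≤ x → 0 ≤ T x) : Continuous T := by
  obtain ⟨M, hM₀, hM⟩ := exists_norm_map_le_mul_of_nonneg hmono T hT
  obtain ⟨C, hC⟩ := exists_forall_mem_nonnegDiffs hgen
  refine AddMonoidHomClass.continuous_of_bound T (M * C) fun x ↦ ?_
  obtain ⟨u, v, hu, hv, huv, hx⟩ := hC x
  calc ‖T x‖ ≤ ‖T u‖ + ‖T v‖ := by rw [hx, map_sub]; exact norm_sub_le _ _
    _ ≤ M * ‖u‖ + M * ‖v‖ := add_le_add (hM u hu) (hM v hv)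
    _ = M * (‖u‖ + ‖v‖) := by ring
    _ ≤ M * (C * ‖x‖) := by gcongr
    _ = M * C * ‖x‖ := by ring

end LinearMap

theorem linear_dominated_by_isotone_is_positive_and_continuous_general
    {E F : Type*}
    [NormedAddCommGroup E] [NormedSpace ℝ E] [CompleteSpace E]
    [PartialOrder E] [CovariantClass E E (· + ·) (· ≤ ·)]
    (hsmulE : ∀ (c : ℝ) (x : E), 0 ≤ c → 0 ≤ x → 0 ≤ c • x)
    (hclosedE : IsClosed {x : E | 0 ≤ x})
    (hgenE : ∀ x : E, ∃ u v : E, 0 ≤ u ∧ 0 ≤ v ∧ x = u - v)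
    [NormedAddCommGroup F] [NormedSpace ℝ F]
    [PartialOrder F] [CovariantClass F F (· + ·) (· ≤ ·)]
    (hsmulF : ∀ (c : ℝ) (x : F), 0 ≤ c → 0 ≤ x → 0 ≤ c • x)
    (hclosedF : IsClosed {x : F | 0 ≤ x})
    (hmonoF : ∀ x y : F, 0 ≤ x → x ≤ y → ‖x‖ ≤ ‖y‖)
    (Φ : E → F) (hiso : ∀ x y : E, x ≤ y → Φ x ≤ Φ y)
    (T : E →ₗ[ℝ] F) (hT : ∀ x : E, T x ≤ Φ x) :
    (∀ x : E, 0 ≤ x → 0 ≤ T x) ∧ Continuous T := by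
  have : IsOrderedAddMonoid E := { add_le_add_left := fun _ _ h c ↦ add_le_add_left h c }
  have : IsOrderedAddMonoid F := { add_le_add_left := fun _ _ h c ↦ add_le_add_left h c }
  have : PosSMulMono ℝ E := .of_smul_nonneg fun c hc x hx ↦ hsmulE c x hc hx
  have : PosSMulMono ℝ F := .of_smul_nonneg fun c hc x hx ↦ hsmulF c x hc hx
  have : OrderClosedTopology E := ⟨isClosed_le_of_isClosed_nonneg hclosedE⟩
  have : OrderClosedTopology F := ⟨isClosed_le_of_isClosed_nonneg hclosedF⟩
  have hpos : ∀ x : E, 0 ≤ x → 0 ≤ T x :=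
    fun _ ↦ T.map_nonneg_of_le_monotone (fun x y ↦ hiso x y) hT
  exact ⟨hpos, T.continuous_of_map_nonneg hgenE hmonoF hpos⟩

/-- If `Φ : E → F` is an isotone function between ordered Banach spaces
and `T : E → F` is a linear operator with `T ≤ Φ`, then `T` is positive, and consequently
continuous. -/
theorem linear_dominated_by_isotone_is_positive_and_continuous
    {E F : Type*}
    [NormedAddCommGroup E] [NormedSpace ℝ E] [CompleteSpace E]
    [PartialOrder E] [CovariantClass E E (· + ·) (· ≤ ·)]
    (hsmulE : ∀ (c : ℝ) (x : E), 0 ≤ c → 0 ≤ x → 0 ≤ c • x)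
    (hclosedE : IsClosed {x : E | 0 ≤ x})
    (hgenE : ∀ x : E, ∃ u v : E, 0 ≤ u ∧ 0 ≤ v ∧ x = u - v)
    (hmonoE : ∀ x y : E, 0 ≤ x → x ≤ y → ‖x‖ ≤ ‖y‖)
    [NormedAddCommGroup F] [NormedSpace ℝ F] [CompleteSpace F]
    [PartialOrder F] [CovariantClass F F (· + ·) (· ≤ ·)]
    (hsmulF : ∀ (c : ℝ) (x : F), 0 ≤ c → 0 ≤ x → 0 ≤ c • x)
    (hclosedF : IsClosed {x : F | 0 ≤ x})
    (hgenF : ∀ x : F, ∃ u v : F, 0 ≤ u ∧ 0 ≤ v ∧ x = u - v)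
    (hmonoF : ∀ x y : F, 0 ≤ x → x ≤ y → ‖x‖ ≤ ‖y‖)
    (Φ : E → F) (hiso : ∀ x y : E, x ≤ y → Φ x ≤ Φ y)
    (T : E →ₗ[ℝ] F) (hT : ∀ x : E, T x ≤ Φ x) :
    (∀ x : E, 0 ≤ x → 0 ≤ T x) ∧ Continuous T :=
  linear_dominated_by_isotone_is_positive_and_continuous_general hsmulE hclosedE hgenE hsmulF
    hclosedF hmonoF Φ hiso T hT
end

section
/- Let E be an ordered real vector space with positive cone E₊, let F be an order complete vector space, let H ⊆ E be a vector subspace and T₁ : H → F a linear operator. If there exists a convex function Φ : E₊ → F such that T₁(h) ≤ Φ(x) for all pairs (h, x) ∈ H × E₊ with h ≤ x, then T₁ admits a positive linear extension T : E → F (T linear, T|_H = T₁, T(x) ≥ 0 for all x ∈ E₊) such that T(x) ≤ Φ(x) for all x ∈ E₊. -/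
/-!
By Zorn's lemma `T₁` has a maximal extension `g` to a partial linear map satisfying
`g y ≤ Φ x` whenever `y ≤ x` and `0 ≤ x`. Such a `g` can always be extended to one more
positive vector `x₀`: the admissible values at `x₀` are cut out by lower bounds
`r⁻¹ • (Φ x - g y)` with `r < 0` and upper bounds of the same shape with `r > 0`, convexity of
`Φ` puts every lower bound below every upper bound, and order completeness of `F` supplies a
value in between. So `g` is defined on the whole positive cone, and any linear extension of `g`
to `E` does the job; it is positive because order completeness makes `F` Archimedean.
-/

theorem nonpos_of_forall_smul_le {F : Type*} [AddCommGroup F] [PartialOrder F]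
    [IsOrderedAddMonoid F] [Module ℝ F]
    (hF : ∀ S : Set F, S.Nonempty → BddAbove S → ∃ b, IsLUB S b) {c d : F}
    (h : ∀ t : ℝ, 0 < t → t • c ≤ d) : c ≤ 0 := by
  obtain ⟨b, hb⟩ := hF ((· • c) '' Set.Ioi 0) ⟨c, 1, one_pos, one_smul ℝ c⟩
    ⟨d, Set.forall_mem_image.2 h⟩
  have : b ≤ b - c := hb.2 <| Set.forall_mem_image.2 fun t ht => by
    have : (t + 1) • c ≤ b := hb.1 ⟨t + 1, Set.mem_Ioi.2 (by linarith [Set.mem_Ioi.1 ht]), rfl⟩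
    rw [add_smul, one_smul] at this
    exact le_sub_iff_add_le.2 this
  simpa using this

namespace LinearPMap

variable {E F : Type*} [AddCommGroup E] [Module ℝ E] [PartialOrder E]
  [AddCommGroup F] [Module ℝ F] [PartialOrder F]

def DominatedBy (f : E →ₗ.[ℝ] F) (Φ : E → F) : Prop :=
  ∀ (y : f.domain) (x : E), 0 ≤ x → (y : E) ≤ x → f y ≤ Φ x

variable {f : E →ₗ.[ℝ] F} {Φ : E → F}

theorem DominatedBy.sSup {c : Set (E →ₗ.[ℝ] F)} (hne : c.Nonempty) (hc : DirectedOn (· ≤ ·) c)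
    (hdom : ∀ f ∈ c, f.DominatedBy Φ) : (LinearPMap.sSup c hc).DominatedBy Φ := by
  rintro ⟨y, hy⟩ x hx hyx
  obtain ⟨f, hfc, hyf⟩ := (mem_domain_sSup_iff hne hc).1 hy
  rw [LinearPMap.sSup_apply hc hfc ⟨y, hyf⟩]
  exact hdom f hfc ⟨y, hyf⟩ x hx hyx

theorem DominatedBy.smul_add_smul_le [IsOrderedAddMonoid E] [PosSMulMono ℝ E] [PosSMulMono ℝ F]
    (hf : f.DominatedBy Φ) (hΦ : ConvexOn ℝ (Set.Ici 0) Φ) {a b : ℝ} (ha : 0 ≤ a) (hb : 0 ≤ b)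
    (hab : 0 < a + b) {y₁ y₂ : f.domain} {x₁ x₂ : E} (hx₁ : 0 ≤ x₁) (hx₂ : 0 ≤ x₂)
    (hyx : a • (y₁ : E) + b • (y₂ : E) ≤ a • x₁ + b • x₂) :
    a • f y₁ + b • f y₂ ≤ a • Φ x₁ + b • Φ x₂ := by
  set k := (a + b)⁻¹
  have hk : 0 < k := inv_pos.2 hab
  have hsum : k * a + k * b = 1 := by rw [← mul_add, inv_mul_cancel₀ hab.ne']
  have hnorm : (k * a) • (y₁ : E) + (k * b) • (y₂ : E) ≤ (k * a) • x₁ + (k * b) • x₂ := by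
    simpa only [smul_add, smul_smul] using smul_le_smul_of_nonneg_left hyx hk.le
  have hconv := hΦ.2 hx₁ hx₂ (mul_nonneg hk.le ha) (mul_nonneg hk.le hb) hsum
  have hdom := hf ((k * a) • y₁ + (k * b) • y₂) _
    (add_nonneg (smul_nonneg (mul_nonneg hk.le ha) hx₁) (smul_nonneg (mul_nonneg hk.le hb) hx₂))
    hnorm
  rw [map_add, map_smul, map_smul] at hdom
  have := hdom.trans hconv
  simp only [mul_smul, ← smul_add] at this
  exact (smul_le_smul_iff_of_pos_left hk).1 this

theorem DominatedBy.inv_smul_sub_le_inv_smul_sub [IsOrderedAddMonoid E] [PosSMulMono ℝ E]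
    [IsOrderedAddMonoid F] [PosSMulMono ℝ F]
    (hf : f.DominatedBy Φ) (hΦ : ConvexOn ℝ (Set.Ici 0) Φ) {x₀ : E} {r₁ r₂ : ℝ}
    (hr₁ : r₁ < 0) (hr₂ : 0 < r₂) {y₁ y₂ : f.domain} {x₁ x₂ : E} (hx₁ : 0 ≤ x₁) (hx₂ : 0 ≤ x₂)
    (h₁ : (y₁ : E) + r₁ • x₀ ≤ x₁) (h₂ : (y₂ : E) + r₂ • x₀ ≤ x₂) :
    r₁⁻¹ • (Φ x₁ - f y₁) ≤ r₂⁻¹ • (Φ x₂ - f y₂) := by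
  have ha : 0 < -r₁⁻¹ := neg_pos.2 (inv_lt_zero.2 hr₁)
  have hb : 0 < r₂⁻¹ := inv_pos.2 hr₂
  have hyx : (-r₁⁻¹) • (y₁ : E) + r₂⁻¹ • (y₂ : E) ≤ (-r₁⁻¹) • x₁ + r₂⁻¹ • x₂ := by
    have := add_le_add (smul_le_smul_of_nonneg_left h₁ ha.le)
      (smul_le_smul_of_nonneg_left h₂ hb.le)
    rwa [smul_add, smul_add, smul_smul, smul_smul, neg_mul, inv_mul_cancel₀ hr₁.ne,
      inv_mul_cancel₀ hr₂.ne', add_add_add_comm, neg_one_smul, one_smul, neg_add_cancel,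
      add_zero] at this
  have key := hf.smul_add_smul_le hΦ ha.le hb.le (add_pos ha hb) hx₁ hx₂ hyx
  rw [← sub_nonneg] at key ⊢
  convert key using 1
  module

theorem dominatedBy_supSpanSingleton {x₀ : E} (hx₀ : x₀ ∉ f.domain) {c : F}
    (hc : ∀ (r : ℝ) (y : f.domain) (x : E), 0 ≤ x → (y : E) + r • x₀ ≤ x → f y + r • c ≤ Φ x) :
    (f.supSpanSingleton x₀ c hx₀).DominatedBy Φ := by
  rintro ⟨z, hz⟩ x hx hzx
  rw [domain_supSpanSingleton] at hz
  obtain ⟨y, hy, _, hr, rfl⟩ := Submodule.mem_sup.1 hz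
  obtain ⟨r, rfl⟩ := Submodule.mem_span_singleton.1 hr
  rw [supSpanSingleton_apply_mk _ _ _ _ _ hy]
  exact hc r ⟨y, hy⟩ x hx hzx

theorem DominatedBy.exists_add_smul_le [IsOrderedAddMonoid E] [PosSMulMono ℝ E]
    [IsOrderedAddMonoid F] [PosSMulMono ℝ F]
    (hF : ∀ S : Set F, S.Nonempty → BddAbove S → ∃ b, IsLUB S b)
    (hf : f.DominatedBy Φ) (hΦ : ConvexOn ℝ (Set.Ici 0) Φ) {x₀ : E} (hx₀ : 0 ≤ x₀) :
    ∃ c : F, ∀ (r : ℝ) (y : f.domain) (x : E), 0 ≤ x → (y : E) + r • x₀ ≤ x →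
      f y + r • c ≤ Φ x := by
  let bounds (s : Set ℝ) : Set F := {u | ∃ r ∈ s, ∃ (y : f.domain) (x : E),
    0 ≤ x ∧ (y : E) + r • x₀ ≤ x ∧ u = r⁻¹ • (Φ x - f y)}
  have hcross : ∀ l ∈ bounds (Set.Iio 0), ∀ u ∈ bounds (Set.Ioi 0), l ≤ u := by
    rintro _ ⟨r₁, hr₁, y₁, x₁, hx₁, h₁, rfl⟩ _ ⟨r₂, hr₂, y₂, x₂, hx₂, h₂, rfl⟩
    exact hf.inv_smul_sub_le_inv_smul_sub hΦ hr₁ hr₂ hx₁ hx₂ h₁ h₂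
  have hlower : -Φ 0 ∈ bounds (Set.Iio 0) :=
    ⟨-1, by norm_num, 0, 0, le_rfl, by simpa using hx₀, by simp⟩
  have hupper : Φ x₀ ∈ bounds (Set.Ioi 0) :=
    ⟨1, Set.mem_Ioi.2 one_pos, 0, x₀, hx₀, by simp, by simp⟩
  obtain ⟨c, hc⟩ := hF _ ⟨_, hlower⟩ ⟨_, fun l hl => hcross l hl _ hupper⟩
  refine ⟨c, fun r y x hx hyx => ?_⟩
  rw [← le_sub_iff_add_le']
  rcases lt_trichotomy r 0 with hr | rfl | hr
  · exact (inv_smul_le_iff_of_neg hr).1 (hc.1 ⟨r, hr, y, x, hx, hyx, rfl⟩)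
  · simpa using hf y x hx (by simpa using hyx)
  · exact (le_inv_smul_iff_of_pos hr).1
      (hc.2 fun l hl => hcross l hl _ ⟨r, hr, y, x, hx, hyx, rfl⟩)

theorem DominatedBy.exists_le_nonneg_mem_domain [IsOrderedAddMonoid E] [PosSMulMono ℝ E]
    [IsOrderedAddMonoid F] [PosSMulMono ℝ F]
    (hF : ∀ S : Set F, S.Nonempty → BddAbove S → ∃ b, IsLUB S b)
    (hf : f.DominatedBy Φ) (hΦ : ConvexOn ℝ (Set.Ici 0) Φ) :
    ∃ g : E →ₗ.[ℝ] F, f ≤ g ∧ g.DominatedBy Φ ∧ ∀ x : E, 0 ≤ x → x ∈ g.domain := by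
  obtain ⟨g, hfg, hg⟩ := zorn_le_nonempty₀ {g : E →ₗ.[ℝ] F | g.DominatedBy Φ}
    (fun c hcS hchain y hy => ⟨_, DominatedBy.sSup ⟨y, hy⟩ hchain.directedOn fun _ hg => hcS hg,
      fun _ => LinearPMap.le_sSup _⟩) f hf
  refine ⟨g, hfg, hg.prop, fun x₀ hx₀ => ?_⟩
  by_contra hx₀g
  obtain ⟨c, hc⟩ := hg.prop.exists_add_smul_le hF hΦ hx₀
  have hle := hg.2 (dominatedBy_supSpanSingleton hx₀g hc) (g.left_le_sup _ _)
  exact hx₀g (hle.1 (Submodule.mem_sup_right (Submodule.mem_span_singleton_self x₀)))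

theorem DominatedBy.map_nonneg [IsOrderedAddMonoid E] [PosSMulMono ℝ E] [IsOrderedAddMonoid F]
    (hF : ∀ S : Set F, S.Nonempty → BddAbove S → ∃ b, IsLUB S b)
    (hf : f.DominatedBy Φ) {y : f.domain} (hy : 0 ≤ (y : E)) : 0 ≤ f y := by
  refine neg_nonpos.1 (nonpos_of_forall_smul_le hF (d := Φ 0) fun t ht => ?_)
  have := hf (-(t • y)) 0 le_rfl (by simpa using smul_nonneg ht.le hy)
  rwa [map_neg, map_smul, ← smul_neg] at this

end LinearPMap

/-- Let `E` be an ordered real vector space, `F` an order complete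
ordered vector space, `H ⊆ E` a subspace and `T₁ : H → F` linear. If there is a convex
function `Φ : E₊ → F` with `T₁ h ≤ Φ x` whenever `h ∈ H`, `x ∈ E₊` and `h ≤ x`, then `T₁`
has a positive linear extension `T : E → F` with `T ≤ Φ` on `E₊`. -/
theorem positive_extension_dominated_by_convex
    {E F : Type*}
    [AddCommGroup E] [Module ℝ E] [PartialOrder E]
    [CovariantClass E E (· + ·) (· ≤ ·)]
    (hsmulE : ∀ (c : ℝ) (x : E), 0 ≤ c → 0 ≤ x → 0 ≤ c • x)
    [AddCommGroup F] [Module ℝ F] [PartialOrder F]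
    [CovariantClass F F (· + ·) (· ≤ ·)]
    (hsmulF : ∀ (c : ℝ) (x : F), 0 ≤ c → 0 ≤ x → 0 ≤ c • x)
    (hcompF : ∀ S : Set F, S.Nonempty → BddAbove S → ∃ b, IsLUB S b)
    (H : Submodule ℝ E) (T₁ : H →ₗ[ℝ] F)
    (Φ : E → F)
    (hconv : ∀ x y : E, 0 ≤ x → 0 ≤ y → ∀ t : ℝ, 0 ≤ t → t ≤ 1 →
      Φ ((1 - t) • x + t • y) ≤ (1 - t) • Φ x + t • Φ y)
    (hdom : ∀ (h : H) (x : E), 0 ≤ x → (h : E) ≤ x → T₁ h ≤ Φ x) :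
    ∃ T : E →ₗ[ℝ] F, (∀ h : H, T h = T₁ h) ∧ (∀ x : E, 0 ≤ x → 0 ≤ T x) ∧
      ∀ x : E, 0 ≤ x → T x ≤ Φ x := by
  have : IsOrderedAddMonoid E := { add_le_add_left := fun _ _ h c => add_le_add_left h c }
  have : IsOrderedAddMonoid F := { add_le_add_left := fun _ _ h c => add_le_add_left h c }
  have : PosSMulMono ℝ E := .of_smul_nonneg fun c hc x hx => hsmulE c x hc hx
  have : PosSMulMono ℝ F := .of_smul_nonneg fun c hc x hx => hsmulF c x hc hx
  have hΦ : ConvexOn ℝ (Set.Ici 0) Φ := ⟨convex_Ici 0, fun x hx y hy a b _ hb hab => by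
    obtain rfl : a = 1 - b := by linarith
    exact hconv x y hx hy b hb (by linarith)⟩
  obtain ⟨g, hHg, hg, hpos⟩ :=
    LinearPMap.DominatedBy.exists_le_nonneg_mem_domain (f := ⟨H, T₁⟩) hcompF hdom hΦ
  obtain ⟨T, hT⟩ := g.toFun.exists_extend
  have hTg (y : g.domain) : T y = g y := LinearMap.congr_fun hT y
  refine ⟨T, fun h => ?_, fun x hx => ?_, fun x hx => ?_⟩
  · exact (hTg ⟨h, hHg.1 h.2⟩).trans (hHg.2 rfl).symm
  · exact (hTg ⟨x, hpos x hx⟩).symm ▸ hg.map_nonneg hcompF hx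
  · exact (hTg ⟨x, hpos x hx⟩).symm ▸ hg ⟨x, hpos x hx⟩ x hx le_rfl
end

section
/- Let E be an ordered Banach space, F an order complete Banach space, and Φ : E → F a continuous convex function. Then the following statements are equivalent: (a) x ≤ y in E implies Φ(x) ≤ Φ(y); (b) for every x₀ ∈ E, every operator in the subdifferential ∂_{x₀}Φ is a positive linear operator; (c) for every x₀ ∈ E, there exists a positive linear operator T ∈ ∂_{x₀}Φ. -/
/-!
(a) ⇒ (b): testing a subgradient `T` at `x₀` against `x₀ - x` with `0 ≤ x` gives
`Φ x₀ - T x ≤ Φ (x₀ - x) ≤ Φ x₀`. (c) ⇒ (a): `Φ y ≥ Φ x + T (y - x) ≥ Φ x` for `x ≤ y`.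

The substance is the existence of continuous subgradients. Put `Ψ h = Φ (x₀ + h) - Φ x₀`.
Order completeness of `F` lets the Hahn–Banach argument run for `F`-valued linear maps dominated
by the convex `Ψ`: a one-dimensional extension in direction `v` is dominated as soon as its value
on `v` lies between all the left difference quotients of `Ψ - f` and all the right ones, and the
left ones are bounded by the right ones by convexity; Zorn's lemma finishes. The resulting linear
`T ≤ Ψ` satisfies `-Ψ (-x) ≤ T x ≤ Ψ x`, so normality of the cone of `F`
(`0 ≤ x ≤ y → ‖x‖ ≤ ‖y‖`) and continuity of `Ψ` at `0` make `T` continuous.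
-/

open Set Filter Topology

namespace LinearPMap

variable {E F : Type*} [AddCommGroup E] [Module ℝ E]
  [AddCommGroup F] [PartialOrder F] [IsOrderedAddMonoid F] [Module ℝ F] [PosSMulMono ℝ F]
  {Ψ : E → F} {f : E →ₗ.[ℝ] F}

theorem lower_slope_le_upper_slope (hΨ : ConvexOn ℝ univ Ψ) (hf : ∀ x : f.domain, f x ≤ Ψ x)
    (v : E) (x₁ x₂ : f.domain) {s t : ℝ} (hs : 0 < s) (ht : 0 < t) :
    s⁻¹ • (f x₁ - Ψ (x₁ - s • v)) ≤ t⁻¹ • (Ψ (x₂ + t • v) - f x₂) := by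
  set a := t / (s + t)
  set b := s / (s + t)
  have hab : a + b = 1 := by simp only [a, b]; field_simp; ring
  -- the `(a, b)`-combination of `x₁ - s • v` and `x₂ + t • v` is a point of `f.domain`
  have hcomb : a • ((x₁ : E) - s • v) + b • ((x₂ : E) + t • v) = a • (x₁ : E) + b • (x₂ : E) := by
    simp only [a, b]
    module
  have hconv : a • f x₁ + b • f x₂ ≤ a • Ψ (x₁ - s • v) + b • Ψ (x₂ + t • v) :=
    calc a • f x₁ + b • f x₂ = f (a • x₁ + b • x₂) := by rw [f.map_add, f.map_smul, f.map_smul]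
      _ ≤ Ψ (a • x₁ + b • x₂) := hf _
      _ ≤ a • Ψ (x₁ - s • v) + b • Ψ (x₂ + t • v) := by
        rw [← hcomb]; exact hΨ.2 trivial trivial (by positivity) (by positivity) hab
  have hweighted : a • (f x₁ - Ψ (x₁ - s • v)) ≤ b • (Ψ (x₂ + t • v) - f x₂) := by
    rw [smul_sub, smul_sub, sub_le_sub_iff, add_comm (b • Ψ _)]
    exact hconv
  have hscale : 0 ≤ (s + t) / (s * t) := by positivity
  have := smul_le_smul_of_nonneg_left hweighted hscale
  rwa [smul_smul, smul_smul, show (s + t) / (s * t) * a = s⁻¹ by simp only [a]; field_simp,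
    show (s + t) / (s * t) * b = t⁻¹ by simp only [b]; field_simp] at this

theorem exists_between_slopes
    (hcomplete : ∀ S : Set F, S.Nonempty → BddAbove S → ∃ c, IsLUB S c)
    (hΨ : ConvexOn ℝ univ Ψ) (hf : ∀ x : f.domain, f x ≤ Ψ x) (v : E) :
    ∃ c : F, (∀ (x : f.domain) (s : ℝ), 0 < s → s⁻¹ • (f x - Ψ (x - s • v)) ≤ c) ∧
      ∀ (x : f.domain) (t : ℝ), 0 < t → c ≤ t⁻¹ • (Ψ (x + t • v) - f x) := by
  set S := {z | ∃ (x : f.domain) (s : ℝ), 0 < s ∧ s⁻¹ • (f x - Ψ (x - s • v)) = z}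
  have hupper : ∀ (x : f.domain) (t : ℝ), 0 < t → t⁻¹ • (Ψ (x + t • v) - f x) ∈ upperBounds S := by
    rintro x t ht _ ⟨x₁, s, hs, rfl⟩
    exact lower_slope_le_upper_slope hΨ hf v x₁ x hs ht
  obtain ⟨c, hc⟩ := hcomplete S ⟨_, 0, 1, one_pos, rfl⟩ ⟨_, hupper 0 1 one_pos⟩
  exact ⟨c, fun x s hs => hc.1 ⟨x, s, hs, rfl⟩, fun x t ht => hc.2 (hupper x t ht)⟩

theorem supSpanSingleton_le_of_between_slopes (hf : ∀ x : f.domain, f x ≤ Ψ x)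
    {y : E} (hy : y ∉ f.domain) {c : F}
    (hlower : ∀ (x : f.domain) (s : ℝ), 0 < s → s⁻¹ • (f x - Ψ (x - s • y)) ≤ c)
    (hupper : ∀ (x : f.domain) (t : ℝ), 0 < t → c ≤ t⁻¹ • (Ψ (x + t • y) - f x)) :
    ∀ z : (f.supSpanSingleton y c hy).domain, f.supSpanSingleton y c hy z ≤ Ψ z := by
  rintro ⟨z, hz⟩
  obtain ⟨x, hx, _, hr, rfl⟩ := Submodule.mem_sup.1 hz
  obtain ⟨r, rfl⟩ := Submodule.mem_span_singleton.1 hr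
  rw [supSpanSingleton_apply_mk _ _ _ _ _ hx]
  rcases lt_trichotomy r 0 with hr | rfl | hr
  · have := (inv_smul_le_iff_of_pos (neg_pos.2 hr)).1 (hlower ⟨x, hx⟩ (-r) (neg_pos.2 hr))
    rwa [neg_smul, sub_neg_eq_add, neg_smul, sub_le_iff_le_add, le_neg_add_iff_add_le,
      add_comm] at this
  · simpa using hf ⟨x, hx⟩
  · have := (le_inv_smul_iff_of_pos hr).1 (hupper ⟨x, hx⟩ r hr)
    rwa [le_sub_iff_add_le'] at this

theorem exists_lt_le_of_convexOn
    (hcomplete : ∀ S : Set F, S.Nonempty → BddAbove S → ∃ c, IsLUB S c)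
    (hΨ : ConvexOn ℝ univ Ψ) (hf : ∀ x : f.domain, f x ≤ Ψ x) (hdom : f.domain ≠ ⊤) :
    ∃ g, f < g ∧ ∀ x : g.domain, g x ≤ Ψ x := by
  obtain ⟨y, -, hy⟩ := SetLike.exists_of_lt (lt_top_iff_ne_top.2 hdom)
  obtain ⟨c, hlower, hupper⟩ := exists_between_slopes hcomplete hΨ hf y
  refine ⟨f.supSpanSingleton y c hy, lt_iff_le_not_ge.2 ⟨f.left_le_sup _ _, fun H => hy ?_⟩,
    supSpanSingleton_le_of_between_slopes hf hy hlower hupper⟩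
  have := domain_mono.monotone H
  rw [domain_supSpanSingleton, sup_le_iff, Submodule.span_le, singleton_subset_iff] at this
  exact this.2

theorem exists_extension_le_of_convexOn
    (hcomplete : ∀ S : Set F, S.Nonempty → BddAbove S → ∃ c, IsLUB S c)
    (hΨ : ConvexOn ℝ univ Ψ) (p : E →ₗ.[ℝ] F) (hp : ∀ x : p.domain, p x ≤ Ψ x) :
    ∃ q ≥ p, q.domain = ⊤ ∧ ∀ x : q.domain, q x ≤ Ψ x := by
  set S := {p : E →ₗ.[ℝ] F | ∀ x : p.domain, p x ≤ Ψ x}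
  have hchain : ∀ c ⊆ S, IsChain (· ≤ ·) c → ∀ y ∈ c, ∃ ub ∈ S, ∀ z ∈ c, z ≤ ub := by
    intro c hcS hc y hy
    have hcd : DirectedOn (· ≤ ·) c := hc.directedOn
    refine ⟨LinearPMap.sSup c hcd, ?_, fun _ => LinearPMap.le_sSup hcd⟩
    rintro ⟨x, hx⟩
    have hdir : DirectedOn (· ≤ ·) (domain '' c) :=
      directedOn_image.2 (hcd.mono domain_mono.monotone)
    obtain ⟨_, ⟨g, hg, rfl⟩, hgx⟩ :=
      (Submodule.mem_sSup_of_directed (Nonempty.image _ ⟨y, hy⟩) hdir).1 hx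
    rw [← (LinearPMap.le_sSup hcd hg).2 (x := ⟨x, hgx⟩) rfl]
    exact hcS hg ⟨x, hgx⟩
  obtain ⟨q, hpq, hqS, hq⟩ := zorn_le_nonempty₀ S hchain p hp
  refine ⟨q, hpq, ?_, hqS⟩
  by_contra hdom
  obtain ⟨r, hqr, hrS⟩ := exists_lt_le_of_convexOn hcomplete hΨ hqS hdom
  exact hqr.ne' (hq hrS hqr.le |>.antisymm hqr.le)

end LinearPMap

theorem exists_linearMap_le_of_convexOn_s11 {E F : Type*} [AddCommGroup E] [Module ℝ E]
    [AddCommGroup F] [PartialOrder F] [IsOrderedAddMonoid F] [Module ℝ F] [PosSMulMono ℝ F]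
    (hcomplete : ∀ S : Set F, S.Nonempty → BddAbove S → ∃ c, IsLUB S c)
    {Ψ : E → F} (hΨ : ConvexOn ℝ univ Ψ) (hΨ0 : 0 ≤ Ψ 0) :
    ∃ T : E →ₗ[ℝ] F, ∀ x, T x ≤ Ψ x := by
  have hbot : ∀ x : (⊥ : E →ₗ.[ℝ] F).domain, (⊥ : E →ₗ.[ℝ] F) x ≤ Ψ x := by
    rintro ⟨x, hx⟩
    obtain rfl : x = 0 := (Submodule.mem_bot ℝ).1 hx
    exact hΨ0
  obtain ⟨⟨_, q⟩, -, rfl, hq⟩ := LinearPMap.exists_extension_le_of_convexOn hcomplete hΨ ⊥ hbot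
  exact ⟨q.comp (LinearMap.id.codRestrict ⊤ fun _ => trivial), fun x => hq ⟨x, trivial⟩⟩

section Normal

variable {F : Type*} [NormedAddCommGroup F] [PartialOrder F] [IsOrderedAddMonoid F]

theorem norm_le_norm_sub_add_norm_of_le_of_le
    (hnormal : ∀ x y : F, 0 ≤ x → x ≤ y → ‖x‖ ≤ ‖y‖) {a b c : F} (hab : a ≤ b) (hbc : b ≤ c) :
    ‖b‖ ≤ ‖c - a‖ + ‖a‖ :=
  calc ‖b‖ = ‖(b - a) + a‖ := by rw [sub_add_cancel]
    _ ≤ ‖b - a‖ + ‖a‖ := norm_add_le _ _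
    _ ≤ ‖c - a‖ + ‖a‖ := by
      gcongr
      exact hnormal _ _ (sub_nonneg.2 hab) (sub_le_sub_right hbc a)

variable [Module ℝ F] {E : Type*} [AddCommGroup E] [Module ℝ E] [TopologicalSpace E]
  [IsTopologicalAddGroup E]

theorem LinearMap.continuous_of_le_of_continuousAt_s11
    (hnormal : ∀ x y : F, 0 ≤ x → x ≤ y → ‖x‖ ≤ ‖y‖) {Ψ : E → F} (hΨ : ContinuousAt Ψ 0)
    (hΨ0 : Ψ 0 = 0) (T : E →ₗ[ℝ] F) (hT : ∀ x, T x ≤ Ψ x) : Continuous T := by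
  have hbound : ∀ x, ‖T x‖ ≤ ‖Ψ x + Ψ (-x)‖ + ‖Ψ (-x)‖ := fun x => by
    have hlower : -Ψ (-x) ≤ T x := by simpa using neg_le_neg (hT (-x))
    simpa using norm_le_norm_sub_add_norm_of_le_of_le hnormal hlower (hT x)
  have hΨneg : ContinuousAt (fun x => Ψ (-x)) 0 :=
    hΨ.comp_of_eq continuous_neg.continuousAt neg_zero
  have hlim : Tendsto (fun x => ‖Ψ x + Ψ (-x)‖ + ‖Ψ (-x)‖) (𝓝 0) (𝓝 0) := by
    simpa [hΨ0] using (hΨ.add hΨneg).norm.tendsto.add hΨneg.norm.tendsto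
  refine continuous_of_continuousAt_zero T ?_
  rw [ContinuousAt, map_zero]
  exact squeeze_zero_norm hbound hlim

theorem ConvexOn.exists_continuous_subgradient [PosSMulMono ℝ F]
    (hnormal : ∀ x y : F, 0 ≤ x → x ≤ y → ‖x‖ ≤ ‖y‖)
    (hcomplete : ∀ S : Set F, S.Nonempty → BddAbove S → ∃ c, IsLUB S c)
    {Φ : E → F} (hΦ : ConvexOn ℝ univ Φ) {x₀ : E} (hcont : ContinuousAt Φ x₀) :
    ∃ T : E →L[ℝ] F, ∀ x, Φ x₀ + T (x - x₀) ≤ Φ x := by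
  set Ψ : E → F := fun h => Φ (x₀ + h) - Φ x₀
  have hΨ : ConvexOn ℝ univ Ψ := (hΦ.translate_right x₀).sub (concaveOn_const _ convex_univ)
  have hΨcont : ContinuousAt Ψ 0 :=
    (hcont.comp_of_eq (continuous_const_add x₀).continuousAt (add_zero x₀)).sub continuousAt_const
  have hΨ0 : Ψ 0 = 0 := by simp [Ψ]
  obtain ⟨T, hT⟩ := exists_linearMap_le_of_convexOn_s11 hcomplete hΨ hΨ0.ge
  refine ⟨⟨T, T.continuous_of_le_of_continuousAt_s11 hnormal hΨcont hΨ0 hT⟩, fun x => ?_⟩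
  simpa [Ψ, le_sub_iff_add_le'] using hT (x - x₀)

end Normal

section Monotone

variable {E F 𝓕 : Type*} [AddCommGroup E] [PartialOrder E] [IsOrderedAddMonoid E]
  [AddCommGroup F] [PartialOrder F] [IsOrderedAddMonoid F] [FunLike 𝓕 E F] {Φ : E → F}

theorem Monotone.map_nonneg_of_subgradient [AddMonoidHomClass 𝓕 E F] (hΦ : Monotone Φ)
    {x₀ : E} {T : 𝓕} (hT : ∀ x, Φ x₀ + T (x - x₀) ≤ Φ x) {x : E} (hx : 0 ≤ x) : 0 ≤ T x := by
  have := (hT (x₀ - x)).trans (hΦ (sub_le_self x₀ hx))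
  rwa [sub_sub_cancel_left, map_neg, add_le_iff_nonpos_right, neg_nonpos] at this

theorem monotone_of_forall_exists_nonneg_subgradient
    (h : ∀ x₀, ∃ T : 𝓕, (∀ x, Φ x₀ + T (x - x₀) ≤ Φ x) ∧ ∀ x, 0 ≤ x → 0 ≤ T x) :
    Monotone Φ := by
  intro x y hxy
  obtain ⟨T, hT, hpos⟩ := h x
  calc Φ x ≤ Φ x + T (y - x) := le_add_of_nonneg_right (hpos _ (sub_nonneg.2 hxy))
    _ ≤ Φ y := hT y

end Monotone

theorem isotone_convex_characterization_general
    {E F : Type*}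
    [NormedAddCommGroup E] [NormedSpace ℝ E]
    [PartialOrder E] [CovariantClass E E (· + ·) (· ≤ ·)]
    [NormedAddCommGroup F] [NormedSpace ℝ F]
    [PartialOrder F] [CovariantClass F F (· + ·) (· ≤ ·)]
    (hsmulF : ∀ (c : ℝ) (x : F), 0 ≤ c → 0 ≤ x → 0 ≤ c • x)
    (hmonoF : ∀ x y : F, 0 ≤ x → x ≤ y → ‖x‖ ≤ ‖y‖)
    (hcompF : ∀ S : Set F, S.Nonempty → BddAbove S → ∃ b, IsLUB S b)
    (Φ : E → F)
    (hconv : ∀ x y : E, ∀ t : ℝ, 0 ≤ t → t ≤ 1 →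
      Φ ((1 - t) • x + t • y) ≤ (1 - t) • Φ x + t • Φ y)
    (hcont : Continuous Φ) :
    List.TFAE
      [∀ x y : E, x ≤ y → Φ x ≤ Φ y,
       ∀ x₀ : E, ∀ T : E →L[ℝ] F, (∀ x : E, Φ x₀ + T (x - x₀) ≤ Φ x) →
         ∀ x : E, 0 ≤ x → 0 ≤ T x,
       ∀ x₀ : E, ∃ T : E →L[ℝ] F, (∀ x : E, Φ x₀ + T (x - x₀) ≤ Φ x) ∧
         ∀ x : E, 0 ≤ x → 0 ≤ T x] := by
  have : IsOrderedAddMonoid E := { add_le_add_left := fun _ _ h c => add_le_add_left h c }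
  have : IsOrderedAddMonoid F := { add_le_add_left := fun _ _ h c => add_le_add_left h c }
  have : PosSMulMono ℝ F := .of_smul_nonneg fun c hc x hx => hsmulF c x hc hx
  have hΦ : ConvexOn ℝ univ Φ := ⟨convex_univ, fun x _ y _ a b _ hb hab => by
    obtain rfl : a = 1 - b := by linarith
    exact hconv x y b hb (by linarith)⟩
  tfae_have 1 → 2 := fun h x₀ T hT x hx => Monotone.map_nonneg_of_subgradient h hT hx
  tfae_have 2 → 3 := fun h x₀ => by
    obtain ⟨T, hT⟩ := hΦ.exists_continuous_subgradient hmonoF hcompF hcont.continuousAt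
    exact ⟨T, hT, h x₀ T hT⟩
  tfae_have 3 → 1 := monotone_of_forall_exists_nonneg_subgradient
  tfae_finish

/-- (Theorem 4) For a continuous convex function `Φ : E → F` from an
ordered Banach space into an order complete Banach space, the following are equivalent:
(a) `Φ` is isotone; (b) every subgradient of `Φ` at every point is positive; (c) at every
point there exists a positive subgradient. -/
theorem isotone_convex_characterization
    {E F : Type*}
    [NormedAddCommGroup E] [NormedSpace ℝ E] [CompleteSpace E]
    [PartialOrder E] [CovariantClass E E (· + ·) (· ≤ ·)]
    (hsmulE : ∀ (c : ℝ) (x : E), 0 ≤ c → 0 ≤ x → 0 ≤ c • x)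
    (hclosedE : IsClosed {x : E | 0 ≤ x})
    (hgenE : ∀ x : E, ∃ u v : E, 0 ≤ u ∧ 0 ≤ v ∧ x = u - v)
    (hmonoE : ∀ x y : E, 0 ≤ x → x ≤ y → ‖x‖ ≤ ‖y‖)
    [NormedAddCommGroup F] [NormedSpace ℝ F] [CompleteSpace F]
    [PartialOrder F] [CovariantClass F F (· + ·) (· ≤ ·)]
    (hsmulF : ∀ (c : ℝ) (x : F), 0 ≤ c → 0 ≤ x → 0 ≤ c • x)
    (hclosedF : IsClosed {x : F | 0 ≤ x})
    (hgenF : ∀ x : F, ∃ u v : F, 0 ≤ u ∧ 0 ≤ v ∧ x = u - v)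
    (hmonoF : ∀ x y : F, 0 ≤ x → x ≤ y → ‖x‖ ≤ ‖y‖)
    (hcompF : ∀ S : Set F, S.Nonempty → BddAbove S → ∃ b, IsLUB S b)
    (Φ : E → F)
    (hconv : ∀ x y : E, ∀ t : ℝ, 0 ≤ t → t ≤ 1 →
      Φ ((1 - t) • x + t • y) ≤ (1 - t) • Φ x + t • Φ y)
    (hcont : Continuous Φ) :
    List.TFAE
      [∀ x y : E, x ≤ y → Φ x ≤ Φ y,
       ∀ x₀ : E, ∀ T : E →L[ℝ] F, (∀ x : E, Φ x₀ + T (x - x₀) ≤ Φ x) →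
         ∀ x : E, 0 ≤ x → 0 ≤ T x,
       ∀ x₀ : E, ∃ T : E →L[ℝ] F, (∀ x : E, Φ x₀ + T (x - x₀) ≤ Φ x) ∧
         ∀ x : E, 0 ≤ x → 0 ≤ T x] :=
  isotone_convex_characterization_general hsmulF hmonoF hcompF Φ hconv hcont
end

section
/- Let E be a Banach lattice, let x₀ ∈ E, and let T : E → E be a continuous linear operator such that T(x₀) = |x₀| and T(x) ≤ |x| for all x ∈ E. Then T(x₀⁺) = x₀⁺, T(x₀⁻) = -x₀⁻, and consequently T(|x₀|) = x₀. In particular, if x₀ ≠ |x₀| and x₀ ≠ -|x₀|, then 1 and -1 are eigenvalues of T with positive eigenvectors x₀⁺ and x₀⁻ respectively. -/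
/-!
Write `x = x⁺ - x⁻`. From `T x ≤ |x|` at `x⁺` and at `-x⁻` we get `0 ≤ x⁺ - T x⁺` and
`0 ≤ x⁻ + T x⁻`, while `T x = |x| = x⁺ + x⁻` says exactly that these two nonnegative elements
add up to `0`. Hence both vanish.
-/

section SubgradientOfAbs

variable {E F : Type*} [Lattice E] [AddCommGroup E] [IsOrderedAddMonoid E]
  [FunLike F E E] [AddMonoidHomClass F E E] {T : F} {x : E}

lemma posPart_sub_map_eq_zero_and_negPart_add_map_eq_zero (hTx : T x = |x|)
    (hT : ∀ y, T y ≤ |y|) : x⁺ - T x⁺ = 0 ∧ x⁻ + T x⁻ = 0 := by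
  have hpos : 0 ≤ x⁺ - T x⁺ :=
    sub_nonneg.mpr <| (hT x⁺).trans_eq (abs_of_nonneg (posPart_nonneg x))
  have hneg : 0 ≤ x⁻ + T x⁻ := by
    have h := hT (-x⁻)
    rw [map_neg, abs_neg, abs_of_nonneg (negPart_nonneg x)] at h
    exact neg_le_iff_add_nonneg.mp h
  have hsum : (x⁺ - T x⁺) + (x⁻ + T x⁻) = 0 := by
    have hT_parts : T x⁺ - T x⁻ = x⁺ + x⁻ := by
      rw [← map_sub, posPart_sub_negPart, hTx, posPart_add_negPart]
    rw [show (x⁺ - T x⁺) + (x⁻ + T x⁻) = (x⁺ + x⁻) - (T x⁺ - T x⁻) by abel, hT_parts,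
      sub_self]
  exact (add_eq_zero_iff_of_nonneg hpos hneg).mp hsum

lemma map_posPart_of_map_eq_abs (hTx : T x = |x|) (hT : ∀ y, T y ≤ |y|) : T x⁺ = x⁺ :=
  (sub_eq_zero.mp (posPart_sub_map_eq_zero_and_negPart_add_map_eq_zero hTx hT).1).symm

lemma map_negPart_of_map_eq_abs (hTx : T x = |x|) (hT : ∀ y, T y ≤ |y|) : T x⁻ = -x⁻ :=
  eq_neg_of_add_eq_zero_right (posPart_sub_map_eq_zero_and_negPart_add_map_eq_zero hTx hT).2

lemma map_abs_of_map_eq_abs (hTx : T x = |x|) (hT : ∀ y, T y ≤ |y|) : T |x| = x := by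
  rw [← posPart_add_negPart, map_add, map_posPart_of_map_eq_abs hTx hT,
    map_negPart_of_map_eq_abs hTx hT, ← sub_eq_add_neg, posPart_sub_negPart]

end SubgradientOfAbs

theorem subgradient_of_abs_fixes_parts_general
    {E : Type*} [NormedAddCommGroup E] [Lattice E] [IsOrderedAddMonoid E] [NormedSpace ℝ E]
    (x₀ : E) (T : E →L[ℝ] E)
    (hTx₀ : T x₀ = |x₀|) (hT : ∀ x : E, T x ≤ |x|) :
    T (x₀ ⊔ 0) = x₀ ⊔ 0 ∧ T ((-x₀) ⊔ 0) = -((-x₀) ⊔ 0) ∧ T |x₀| = x₀ ∧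
      (x₀ ≠ |x₀| → x₀ ≠ -|x₀| →
        (x₀ ⊔ 0 ≠ 0 ∧ 0 ≤ x₀ ⊔ 0 ∧ T (x₀ ⊔ 0) = (1 : ℝ) • (x₀ ⊔ 0)) ∧
        ((-x₀) ⊔ 0 ≠ 0 ∧ 0 ≤ (-x₀) ⊔ 0 ∧ T ((-x₀) ⊔ 0) = (-1 : ℝ) • ((-x₀) ⊔ 0))) := by
  rw [← posPart_def, ← negPart_def]
  have hpos := map_posPart_of_map_eq_abs hTx₀ hT
  have hneg := map_negPart_of_map_eq_abs hTx₀ hT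
  refine ⟨hpos, hneg, map_abs_of_map_eq_abs hTx₀ hT, fun h_ne_abs h_ne_neg_abs => ?_⟩
  refine ⟨⟨?_, posPart_nonneg x₀, by rw [one_smul, hpos]⟩,
    ⟨?_, negPart_nonneg x₀, by rw [neg_one_smul, hneg]⟩⟩
  · exact fun h => h_ne_neg_abs (neg_eq_iff_eq_neg.mp (abs_of_nonpos (posPart_eq_zero.mp h)).symm)
  · exact fun h => h_ne_abs (abs_of_nonneg (negPart_eq_zero.mp h)).symm

/-- Let `E` be a Banach lattice, `x₀ ∈ E` and `T : E → E` a continuous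
linear operator with `T x₀ = |x₀|` and `T x ≤ |x|` for all `x` (i.e. `T ∈ ∂_{x₀}P` for
`P x = |x|`). Then `T x₀⁺ = x₀⁺`, `T x₀⁻ = -x₀⁻` and `T |x₀| = x₀`; in particular if
`x₀ ≠ |x₀|` and `x₀ ≠ -|x₀|` then `1` and `-1` are eigenvalues of `T` with positive
eigenvectors `x₀⁺` and `x₀⁻`. -/
theorem subgradient_of_abs_fixes_parts
    {E : Type*} [NormedAddCommGroup E] [Lattice E] [HasSolidNorm E] [IsOrderedAddMonoid E] [NormedSpace ℝ E] [CompleteSpace E]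
    (x₀ : E) (T : E →L[ℝ] E)
    (hTx₀ : T x₀ = |x₀|) (hT : ∀ x : E, T x ≤ |x|) :
    T (x₀ ⊔ 0) = x₀ ⊔ 0 ∧ T ((-x₀) ⊔ 0) = -((-x₀) ⊔ 0) ∧ T |x₀| = x₀ ∧
      (x₀ ≠ |x₀| → x₀ ≠ -|x₀| →
        (x₀ ⊔ 0 ≠ 0 ∧ 0 ≤ x₀ ⊔ 0 ∧ T (x₀ ⊔ 0) = (1 : ℝ) • (x₀ ⊔ 0)) ∧
        ((-x₀) ⊔ 0 ≠ 0 ∧ 0 ≤ (-x₀) ⊔ 0 ∧ T ((-x₀) ⊔ 0) = (-1 : ℝ) • ((-x₀) ⊔ 0))) :=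
  subgradient_of_abs_fixes_parts_general x₀ T hTx₀ hT
end
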